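/- arXiv:1912.03536 — 4 statements merged into one kernel-verified Lean document; each statement's English description precedes it below -/
import Mathlib

section
/- Let G be a group. For g, h ∈ G write g^h := h^{-1}gh and [g,h] := ghg^{-1}h^{-1}. Say a pair (a,b) ∈ G × G is reducible to (a',b') by g ∈ G if a' = [a^{-1},g] and b' = [g,b]. Suppose (a_1,b_1), (a_2,b_2) ∈ G × G and g_1, …, g_n ∈ G are such that (a_1,b_1) is reducible to (a_2,b_2) by the successive steps g_1, …, g_n (i.e., there is a chain of pairs starting at (a_1,b_1) and ending at (a_2,b_2) in which each pair is reducible to the next by the corresponding g_i). Let H be the subgroup of G generated by {a_1, g_1, …, g_n}. Then a_2·b_2 can be written as a product of 2^n elements, each of which is of the form c^h with c ∈ {a_1b_1, (a_1b_1)^{-1}} and h ∈ H. -/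
/-!
Write `x = a₀b₀` and `S` for the set of `H`-conjugates of `x` and `x⁻¹`. A single reduction step
satisfies the identity `[a⁻¹, g] [g, b] = (ab)^(g⁻¹a) · ((ab)⁻¹)^a`, where both conjugators lie in `H`
as long as `a` and `g` do. Since `S` is closed under inversion and `H`-conjugation, so is each
power `S ^ m`; hence if `ab ∈ S ^ m` then the reduced pair satisfies `a'b' ∈ S ^ (2m)`, and
`a' = [a⁻¹, g]` stays in `H`. Induction on the number of steps gives `a_n b_n ∈ S ^ (2 ^ n)`.
-/

open Pointwise

lemma Set.MapsTo.pow {M N F : Type*} [Monoid M] [Monoid N] [FunLike F M N]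
    [MonoidHomClass F M N] {f : F} {S : Set M} {T : Set N} (hf : Set.MapsTo f S T) (m : ℕ) :
    Set.MapsTo f (S ^ m) (T ^ m) := by
  rw [Set.mapsTo_iff_image_subset, Set.image_pow]
  exact Set.pow_subset_pow_left hf.image_subset

section

variable {G : Type*} [Group G]

namespace Subgroup

variable (H : Subgroup G) (x : G)

def signedConjugates : Set G :=
  {c | ∃ h ∈ H, c = h⁻¹ * x * h ∨ c = h⁻¹ * x⁻¹ * h}

variable {H x}

lemma self_mem_signedConjugates : x ∈ H.signedConjugates x :=
  ⟨1, H.one_mem, Or.inl (by group)⟩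

lemma inv_signedConjugates_subset : (H.signedConjugates x)⁻¹ ⊆ H.signedConjugates x := by
  rintro c ⟨h, hh, hc⟩
  refine ⟨h, hh, ?_⟩
  rw [← inv_inv c]
  rcases hc with hc | hc <;> rw [hc]
  · exact Or.inr (by group)
  · exact Or.inl (by group)

lemma conj_mem_signedConjugates {k c : G} (hk : k ∈ H) (hc : c ∈ H.signedConjugates x) :
    k⁻¹ * c * k ∈ H.signedConjugates x := by
  obtain ⟨h, hh, hc⟩ := hc
  refine ⟨h * k, H.mul_mem hh hk, ?_⟩
  rcases hc with rfl | rfl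
  · exact Or.inl (by group)
  · exact Or.inr (by group)

variable {m : ℕ} {y : G}

lemma conj_mem_signedConjugates_pow {k : G} (hk : k ∈ H) (hy : y ∈ H.signedConjugates x ^ m) :
    k⁻¹ * y * k ∈ H.signedConjugates x ^ m := by
  have hconj : Set.MapsTo (MulAut.conj k⁻¹) (H.signedConjugates x) (H.signedConjugates x) :=
    fun c hc ↦ by simpa using conj_mem_signedConjugates hk hc
  simpa using hconj.pow m hy

lemma inv_mem_signedConjugates_pow (hy : y ∈ H.signedConjugates x ^ m) :
    y⁻¹ ∈ H.signedConjugates x ^ m := by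
  have : y⁻¹ ∈ (H.signedConjugates x)⁻¹ ^ m := by
    rw [inv_pow]
    exact Set.inv_mem_inv.mpr hy
  exact Set.pow_subset_pow_left inv_signedConjugates_subset this

end Subgroup

lemma commutator_mul_commutator_eq_conj_mul_conj (a b g : G) :
    a⁻¹ * g * a * g⁻¹ * (g * b * g⁻¹ * b⁻¹) =
      (g⁻¹ * a)⁻¹ * (a * b) * (g⁻¹ * a) * (a⁻¹ * (a * b)⁻¹ * a) := by
  group

lemma Subgroup.reduction_mul_mem_signedConjugates_pow {H : Subgroup G} {x a b g : G} {m : ℕ}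
    (ha : a ∈ H) (hg : g ∈ H) (hab : a * b ∈ H.signedConjugates x ^ m) :
    a⁻¹ * g * a * g⁻¹ * (g * b * g⁻¹ * b⁻¹) ∈ H.signedConjugates x ^ (2 * m) := by
  rw [commutator_mul_commutator_eq_conj_mul_conj, two_mul, pow_add]
  exact Set.mul_mem_mul (conj_mem_signedConjugates_pow (H.mul_mem (H.inv_mem hg) ha) hab)
    (conj_mem_signedConjugates_pow ha (inv_mem_signedConjugates_pow hab))

end

/-- Lemma on simultaneous reduction in groups: if `(a 0, b 0)` is reducible to
`(a n, b n)` by successive steps `g 0, …, g (n-1)` (where reducibility of `(a,b)`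
to `(a',b')` by `g` means `a' = [a⁻¹, g]` and `b' = [g, b]`), then
`a n * b n` is a product of `2^n` `H`-conjugates of `a 0 * b 0` and its inverse,
where `H` is the subgroup generated by `{a 0, g 0, …, g (n-1)}`. -/
theorem stmt0 {G : Type*} [Group G] (n : ℕ) (a b : Fin (n + 1) → G) (g : Fin n → G)
    (hstep : ∀ i : Fin n,
      a i.succ = (a i.castSucc)⁻¹ * g i * (a i.castSucc) * (g i)⁻¹ ∧
      b i.succ = g i * b i.castSucc * (g i)⁻¹ * (b i.castSucc)⁻¹) :
    ∃ c : Fin (2 ^ n) → G,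
      (∀ p, ∃ h ∈ Subgroup.closure ({a 0} ∪ Set.range g),
        c p = h⁻¹ * (a 0 * b 0) * h ∨ c p = h⁻¹ * (a 0 * b 0)⁻¹ * h) ∧
      (List.ofFn c).prod = a (Fin.last n) * b (Fin.last n) := by
  set H := Subgroup.closure ({a 0} ∪ Set.range g)
  have hg (i : Fin n) : g i ∈ H := Subgroup.subset_closure (Or.inr ⟨i, rfl⟩)
  have key (i : Fin (n + 1)) :
      a i ∈ H ∧ a i * b i ∈ H.signedConjugates (a 0 * b 0) ^ 2 ^ (i : ℕ) := by
    induction i using Fin.induction with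
    | zero =>
      exact ⟨Subgroup.subset_closure (Or.inl rfl), by simpa using H.self_mem_signedConjugates⟩
    | succ i ih =>
      obtain ⟨ha, hab⟩ := ih
      rw [(hstep i).1, (hstep i).2, Fin.val_succ, pow_succ']
      rw [Fin.val_castSucc] at hab
      exact ⟨H.mul_mem (H.mul_mem (H.mul_mem (H.inv_mem ha) (hg i)) ha) (H.inv_mem (hg i)),
        Subgroup.reduction_mul_mem_signedConjugates_pow ha (hg i) hab⟩
  obtain ⟨c, hc⟩ := Set.mem_pow.mp (key (Fin.last n)).2
  exact ⟨fun p ↦ c p, fun p ↦ (c p).2, hc⟩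
end

section
/- Let σ ∈ GL_n(R) with σ_{1n} = 0. Then for any j with 2 ≤ j ≤ n, any indices k ≠ l, and any a, b ∈ R, the elementary transvection t_{kl}(a σ'_{1j} b) is a product of 8 elements, each of which is an E_n(R)-conjugate of σ or of σ^{-1}. -/
open Matrix

/-- The ring of n×n matrices over R. -/
abbrev Mat (n : ℕ) (R : Type*) [Ring R] := Matrix (Fin n) (Fin n) R

/-- The elementary transvection t_{ij}(x) = e + x·e^{ij}. -/
def trv {n : ℕ} {R : Type*} [Ring R] (i j : Fin n) (x : R) : Mat n R :=
  1 + Matrix.single i j x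

/-- The elementary subgroup E_n(R) of GL_n(R), generated by the elementary
transvections t_{ij}(x) with i ≠ j. -/
def En (n : ℕ) (R : Type*) [Ring R] : Subgroup (Mat n R)ˣ :=
  Subgroup.closure
    { u : (Mat n R)ˣ | ∃ i j : Fin n, i ≠ j ∧ ∃ x : R, u.val = trv i j x }

/-- `A` is a product of `m` E_n(R)-conjugates of `σ` and `σ⁻¹`, i.e.
`A = g₁ ⋯ g_m` where each `g_p = ξ_p⁻¹ τ_p ξ_p` with `τ_p ∈ {σ, σ⁻¹}` and `ξ_p ∈ E_n(R)`. -/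
def IsProdConj {n : ℕ} {R : Type*} [Ring R] (m : ℕ) (σ : (Mat n R)ˣ) (A : Mat n R) : Prop :=
  ∃ g : Fin m → (Mat n R)ˣ,
    (∀ p, ∃ ξ ∈ En n R, g p = ξ⁻¹ * σ * ξ ∨ g p = ξ⁻¹ * σ⁻¹ * ξ) ∧
    (List.ofFn g).prod.val = A

/-!
Write `o` for the first index and `ν` for the last, let `c = σ e_ν` be the last column of `σ`
(so `c_o = σ_{1n} = 0`) and `r = e_oᵀ σ⁻¹` the first row of `σ⁻¹` (so `r c = 0`).
For the commuting transvections `A = t_{νo}(x)` and `B = t_{jo}(b)`, the commutator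
`[σAσ⁻¹, B]` is a product of four `E_n(R)`-conjugates of `σ^{±1}`; as `σAσ⁻¹ = 1 + c x r` and
`B = 1 + e_j b e_oᵀ` are square-zero perturbations of `1` with `(e_j b e_oᵀ)(c x r) = 0`, it
equals `1 + c (x σ'_{1j} b) e_oᵀ`. An elementary `E = 1 + v w` (the commutator of a column and
a row unipotent) moves `c` to `c + (e_k - c κ) a`, where `κ = σ'_{nk}`, so for `x = κ a - 1`
the commutator times the `E`-conjugate of the one for `x = 1` is `t_{ko}(a σ'_{1j} b)`.
Conjugating by the Weyl element `t_{ol}(1) t_{lo}(-1) t_{ol}(1)` moves column `o` to any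
column `l`.
-/

section SquareZero

variable {S : Type*} [Ring S]

theorem Units.val_inv_eq_one_sub_of_mul_self_eq_zero {P : Sˣ} {X : S} (hP : (P : S) = 1 + X)
    (hX : X * X = 0) : ((P⁻¹ : Sˣ) : S) = 1 - X :=
  Units.inv_eq_of_mul_eq_one_right <| by
    rw [hP, show (1 + X) * (1 - X) = 1 - X * X by noncomm_ring, hX, sub_zero]

theorem Units.val_commutator_eq_one_add_mul {P Q : Sˣ} {X Y : S} (hP : (P : S) = 1 + X)
    (hQ : (Q : S) = 1 + Y) (hX : X * X = 0) (hY : Y * Y = 0) (hYX : Y * X = 0) :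
    ((P⁻¹ * Q⁻¹ * P * Q : Sˣ) : S) = 1 + X * Y := by
  have hmid : (1 - Y) * (1 + X) = 1 + X - Y := by
    rw [show (1 - Y) * (1 + X) = 1 + X - Y - Y * X by noncomm_ring, hYX, sub_zero]
  simp only [Units.val_mul, Units.val_inv_eq_one_sub_of_mul_self_eq_zero hP hX,
    Units.val_inv_eq_one_sub_of_mul_self_eq_zero hQ hY, hP, hQ]
  calc (1 - X) * (1 - Y) * (1 + X) * (1 + Y) = (1 - X) * ((1 - Y) * (1 + X)) * (1 + Y) := by
        noncomm_ring
    _ = 1 + X * Y - Y * Y + X * (Y * Y) - X * X - X * X * Y := by rw [hmid]; noncomm_ring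
    _ = 1 + X * Y := by simp [hX, hY]

theorem Subgroup.exists_val_eq_one_add_sum (H : Subgroup Sˣ) {ι : Type*} (s : Finset ι)
    (X : ι → S) (hX : ∀ i ∈ s, ∃ U ∈ H, (U : S) = 1 + X i)
    (hXX : ∀ i ∈ s, ∀ j ∈ s, X i * X j = 0) : ∃ U ∈ H, (U : S) = 1 + ∑ i ∈ s, X i := by
  classical
  induction s using Finset.induction_on with
  | empty => exact ⟨1, one_mem H, by simp⟩
  | insert a s ha ih =>
    obtain ⟨U, hU, hUX⟩ := hX a (Finset.mem_insert_self a s)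
    obtain ⟨V, hV, hVX⟩ := ih (fun i hi => hX i (Finset.mem_insert_of_mem hi))
      (fun i hi j hj => hXX i (Finset.mem_insert_of_mem hi) j (Finset.mem_insert_of_mem hj))
    have hXa : X a * ∑ i ∈ s, X i = 0 := by
      rw [Finset.mul_sum]
      exact Finset.sum_eq_zero fun i hi =>
        hXX a (Finset.mem_insert_self a s) i (Finset.mem_insert_of_mem hi)
    refine ⟨U * V, mul_mem hU hV, ?_⟩
    rw [Units.val_mul, hUX, hVX, Finset.sum_insert ha,
      show (1 + X a) * (1 + ∑ i ∈ s, X i) = 1 + (X a + ∑ i ∈ s, X i) + X a * ∑ i ∈ s, X i by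
        noncomm_ring, hXa, add_zero]

end SquareZero

section Elementary

variable {n : ℕ} {R : Type*} [Ring R]

theorem single_eq_vecMulVec (i j : Fin n) (c : R) :
    single i j c = vecMulVec (Pi.single i c) (Pi.single j 1) := by
  ext p q
  simp only [single_apply, vecMulVec_apply, Pi.single_apply]
  split_ifs <;> simp_all

theorem vecMulVec_mul_vecMulVec_of_dotProduct_eq_zero {u v w x : Fin n → R} (h : v ⬝ᵥ w = 0) :
    vecMulVec u v * vecMulVec w x = 0 := by
  rw [vecMulVec_mul_vecMulVec, h, zero_smul, vecMulVec_zero]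

theorem one_add_vecMulVec_mul_one_add_vecMulVec {x y x' y' : Fin n → R} (h : y ⬝ᵥ x' = 0) :
    (1 + vecMulVec x y) * (1 + vecMulVec x' y') = 1 + vecMulVec x y + vecMulVec x' y' := by
  rw [mul_add, add_mul, add_mul, one_mul, mul_one, one_mul,
    vecMulVec_mul_vecMulVec_of_dotProduct_eq_zero h, add_zero, add_assoc]

theorem val_inv_mul_one_add_vecMulVec_mul (ξ : (Mat n R)ˣ) (x y : Fin n → R) :
    ((ξ⁻¹ : (Mat n R)ˣ) : Mat n R) * (1 + vecMulVec x y) * (ξ : Mat n R) =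
      1 + vecMulVec ((ξ⁻¹ : (Mat n R)ˣ) *ᵥ x) (y ᵥ* (ξ : Mat n R)) := by
  rw [mul_add, add_mul, mul_one, Units.inv_mul, mul_vecMulVec, vecMulVec_mul]

theorem trv_mul_trv {i j : Fin n} (h : i ≠ j) (x y : R) :
    trv i j x * trv i j y = trv i j (x + y) := by
  simp only [trv, add_mul, mul_add, one_mul, mul_one, single_mul_single_of_ne x i j i h.symm y,
    single_add]
  abel

theorem trv_mulVec (i j : Fin n) (c : R) (u : Fin n → R) :
    trv i j c *ᵥ u = u + Pi.single i (c * u j) := by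
  ext p
  simp [trv, add_mulVec, single_eq_vecMulVec, vecMulVec_mulVec, Pi.single_apply]

theorem vecMul_trv (i j : Fin n) (c : R) (v : Fin n → R) :
    v ᵥ* trv i j c = v + Pi.single j (v i * c) := by
  ext q
  simp [trv, vecMul_add, single_eq_vecMulVec, vecMul_vecMulVec, Pi.single_apply]

def trvUnit (i j : Fin n) (h : i ≠ j) (x : R) : (Mat n R)ˣ where
  val := trv i j x
  inv := trv i j (-x)
  val_inv := by rw [trv_mul_trv h, add_neg_cancel, trv, single_zero, add_zero]
  inv_val := by rw [trv_mul_trv h, neg_add_cancel, trv, single_zero, add_zero]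

@[simp] theorem val_trvUnit (i j : Fin n) (h : i ≠ j) (x : R) :
    (trvUnit i j h x : Mat n R) = trv i j x := rfl

@[simp] theorem val_trvUnit_inv (i j : Fin n) (h : i ≠ j) (x : R) :
    ((trvUnit i j h x)⁻¹ : (Mat n R)ˣ) = trv i j (-x) := rfl

theorem trvUnit_mem_En (i j : Fin n) (h : i ≠ j) (x : R) : trvUnit i j h x ∈ En n R :=
  Subgroup.subset_closure ⟨i, j, h, x, rfl⟩

theorem exists_mem_En_val_eq_one_add_vecMulVec_single_left {m : Fin n} {v : Fin n → R}
    (hv : v m = 0) : ∃ U ∈ En n R, (U : Mat n R) = 1 + vecMulVec (Pi.single m 1) v := by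
  have hsum : ∑ i ∈ Finset.univ.erase m, single m i (v i) = vecMulVec (Pi.single m 1) v := by
    rw [Finset.sum_erase _ (by rw [hv, single_zero])]
    ext p q
    by_cases hp : p = m
    · simp [Matrix.sum_apply, single_apply, vecMulVec_apply, hp]
    · simp [Matrix.sum_apply, vecMulVec_apply, hp, Ne.symm hp]
  rw [← hsum]
  refine (En n R).exists_val_eq_one_add_sum _ _ (fun i hi => ?_) fun i hi j _ => ?_
  · exact ⟨_, trvUnit_mem_En m i (Finset.ne_of_mem_erase hi).symm (v i), rfl⟩
  · exact single_mul_single_of_ne _ _ _ _ (Finset.ne_of_mem_erase hi) _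

theorem exists_mem_En_val_eq_one_add_vecMulVec_single_right {m : Fin n} {u : Fin n → R}
    (hu : u m = 0) : ∃ U ∈ En n R, (U : Mat n R) = 1 + vecMulVec u (Pi.single m 1) := by
  have hsum : ∑ i ∈ Finset.univ.erase m, single i m (u i) = vecMulVec u (Pi.single m 1) := by
    rw [Finset.sum_erase _ (by rw [hu, single_zero])]
    ext p q
    by_cases hq : q = m
    · simp [Matrix.sum_apply, single_apply, vecMulVec_apply, hq]
    · simp [Matrix.sum_apply, vecMulVec_apply, hq, Ne.symm hq]
  rw [← hsum]
  refine (En n R).exists_val_eq_one_add_sum _ _ (fun i hi => ?_) fun i _ j hj => ?_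
  · exact ⟨_, trvUnit_mem_En i m (Finset.ne_of_mem_erase hi) (u i), rfl⟩
  · exact single_mul_single_of_ne _ _ _ _ (Finset.ne_of_mem_erase hj).symm _

theorem exists_mem_En_val_eq_one_add_vecMulVec {m : Fin n} {u v : Fin n → R} (hu : u m = 0)
    (hv : v m = 0) (hvu : v ⬝ᵥ u = 0) :
    ∃ E ∈ En n R, (E : Mat n R) = 1 + vecMulVec u v := by
  obtain ⟨U, hU, hUu⟩ := exists_mem_En_val_eq_one_add_vecMulVec_single_right hu
  obtain ⟨V, hV, hVv⟩ := exists_mem_En_val_eq_one_add_vecMulVec_single_left hv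
  refine ⟨U⁻¹ * V⁻¹ * U * V, mul_mem (mul_mem (mul_mem (inv_mem hU) (inv_mem hV)) hU) hV, ?_⟩
  rw [Units.val_commutator_eq_one_add_mul hUu hVv, vecMulVec_mul_vecMulVec]
  · simp
  · exact vecMulVec_mul_vecMulVec_of_dotProduct_eq_zero (by simp [hu])
  · exact vecMulVec_mul_vecMulVec_of_dotProduct_eq_zero (by simp [hv])
  · exact vecMulVec_mul_vecMulVec_of_dotProduct_eq_zero hvu

open MulOpposite in
theorem exists_mem_En_conj_one_add_vecMulVec_single {o k : Fin n} (hko : k ≠ o)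
    {x u : Fin n → R} (hx : x o = 0) (hu : u o = 0) (hux : u ⬝ᵥ x = 1) (a : R) :
    ∃ E ∈ En n R, ∀ y : R,
      (E : Mat n R) * (1 + vecMulVec x (Pi.single o y)) * ((E⁻¹ : (Mat n R)ˣ) : Mat n R) =
        1 + vecMulVec (x + op a • (Pi.single k 1 - op (u k) • x)) (Pi.single o y) := by
  set v := Pi.single k 1 - op (u k) • x
  have hv : v o = 0 := by simp [v, hx, hko.symm]
  have hwv : (a • u) ⬝ᵥ v = 0 := by simp [v, dotProduct_sub, hux]
  obtain ⟨E, hE, hEv⟩ := exists_mem_En_val_eq_one_add_vecMulVec hv (by simp [hu]) hwv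
  have hEinv := Units.val_inv_eq_one_sub_of_mul_self_eq_zero hEv
    (vecMulVec_mul_vecMulVec_of_dotProduct_eq_zero hwv)
  refine ⟨E, hE, fun y => ?_⟩
  simpa [hEv, hEinv, add_mulVec, vecMulVec_mulVec, vecMul_sub, vecMul_vecMulVec, hux, hv] using
    val_inv_mul_one_add_vecMulVec_mul E⁻¹ x (Pi.single o y)

def weylUnit (o l : Fin n) (h : o ≠ l) : (Mat n R)ˣ :=
  trvUnit o l h 1 * trvUnit l o h.symm (-1) * trvUnit o l h 1

theorem weylUnit_mem_En (o l : Fin n) (h : o ≠ l) : weylUnit (R := R) o l h ∈ En n R :=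
  mul_mem (mul_mem (trvUnit_mem_En _ _ _ _) (trvUnit_mem_En _ _ _ _)) (trvUnit_mem_En _ _ _ _)

theorem val_weylUnit (o l : Fin n) (h : o ≠ l) :
    (weylUnit (R := R) o l h : Mat n R) = trv o l 1 * trv l o (-1) * trv o l 1 := rfl

theorem val_weylUnit_inv (o l : Fin n) (h : o ≠ l) :
    (((weylUnit (R := R) o l h)⁻¹ : (Mat n R)ˣ) : Mat n R) =
      trv o l (-1) * trv l o 1 * trv o l (-1) := by
  simp [weylUnit, mul_assoc]

theorem single_vecMul_weylUnit {o l : Fin n} (h : o ≠ l) :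
    Pi.single o 1 ᵥ* (weylUnit (R := R) o l h : Mat n R) = Pi.single l 1 := by
  rw [val_weylUnit, ← vecMul_vecMul, ← vecMul_vecMul, vecMul_trv, vecMul_trv, vecMul_trv]
  ext q
  by_cases hq : q = o <;> simp [Pi.single_apply, hq, h, h.symm]

theorem weylUnit_inv_mulVec_single_of_ne {o l k : Fin n} (h : o ≠ l) (hko : k ≠ o)
    (hkl : k ≠ l) (x : R) :
    (((weylUnit (R := R) o l h)⁻¹ : (Mat n R)ˣ) : Mat n R) *ᵥ Pi.single k x = Pi.single k x := by
  rw [val_weylUnit_inv, ← mulVec_mulVec, ← mulVec_mulVec, trv_mulVec, trv_mulVec, trv_mulVec]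
  simp [hko.symm, hkl.symm]

theorem weylUnit_inv_mulVec_single_right {o l : Fin n} (h : o ≠ l) (x : R) :
    (((weylUnit (R := R) o l h)⁻¹ : (Mat n R)ˣ) : Mat n R) *ᵥ Pi.single l x =
      Pi.single o (-x) := by
  rw [val_weylUnit_inv, ← mulVec_mulVec, ← mulVec_mulVec, trv_mulVec, trv_mulVec, trv_mulVec]
  ext p
  by_cases hp : p = l <;> simp [Pi.single_apply, hp, h, h.symm]

end Elementary

section IsProdConj

variable {n : ℕ} {R : Type*} [Ring R] {σ : (Mat n R)ˣ}

theorem isProdConj_one_conj {ξ : (Mat n R)ˣ} (hξ : ξ ∈ En n R) :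
    IsProdConj 1 σ ↑(ξ⁻¹ * σ * ξ) :=
  ⟨fun _ => ξ⁻¹ * σ * ξ, fun _ => ⟨ξ, hξ, Or.inl rfl⟩, by simp⟩

theorem isProdConj_one_conj_inv {ξ : (Mat n R)ˣ} (hξ : ξ ∈ En n R) :
    IsProdConj 1 σ ↑(ξ⁻¹ * σ⁻¹ * ξ) :=
  ⟨fun _ => ξ⁻¹ * σ⁻¹ * ξ, fun _ => ⟨ξ, hξ, Or.inr rfl⟩, by simp⟩

theorem IsProdConj.mul {m m' : ℕ} {A B : Mat n R} (hA : IsProdConj m σ A)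
    (hB : IsProdConj m' σ B) : IsProdConj (m + m') σ (A * B) := by
  obtain ⟨g, hg, rfl⟩ := hA
  obtain ⟨g', hg', rfl⟩ := hB
  refine ⟨Fin.append g g', fun p => ?_, by simp⟩
  induction p using Fin.addCases with
  | left p => simpa using hg p
  | right p => simpa using hg' p

theorem IsProdConj.conj {m : ℕ} {A : Mat n R} (h : IsProdConj m σ A) {ξ : (Mat n R)ˣ}
    (hξ : ξ ∈ En n R) : IsProdConj m σ (↑ξ⁻¹ * A * ↑ξ) := by
  obtain ⟨g, hg, rfl⟩ := h
  refine ⟨fun p => ξ⁻¹ * g p * ξ, fun p => ?_, ?_⟩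
  · obtain ⟨η, hη, hgp⟩ := hg p
    refine ⟨η * ξ, mul_mem hη hξ, ?_⟩
    rcases hgp with hgp | hgp <;> [left; right] <;> simp only [hgp] <;> group
  · have := map_list_prod (MulAut.conj ξ⁻¹) (List.ofFn g)
    simp only [MulAut.conj_apply, inv_inv, List.map_ofFn] at this
    rw [← Units.val_mul, ← Units.val_mul, this]
    rfl

theorem isProdConj_four_commutator {A Q : (Mat n R)ˣ} (hA : A ∈ En n R) (hQ : Q ∈ En n R)
    (hAQ : Commute A Q) : IsProdConj 4 σ ↑((σ * A * σ⁻¹)⁻¹ * Q⁻¹ * (σ * A * σ⁻¹) * Q) := by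
  have h := (((isProdConj_one_conj (σ := σ) (one_mem _)).mul (isProdConj_one_conj_inv hA)).mul
    (isProdConj_one_conj (mul_mem hQ hA))).mul (isProdConj_one_conj_inv hQ)
  simp only [← Units.val_mul] at h
  convert h using 2
  have hQAQ : Q * A * Q⁻¹ = A := by rw [← hAQ.eq, mul_inv_cancel_right]
  calc (σ * A * σ⁻¹)⁻¹ * Q⁻¹ * (σ * A * σ⁻¹) * Q
      = σ * A⁻¹ * σ⁻¹ * Q⁻¹ * σ * (Q * A * Q⁻¹) * σ⁻¹ * Q := by rw [hQAQ]; group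
    _ = _ := by group

theorem isProdConj_four_one_add_vecMulVec {o ν j : Fin n} (hνo : ν ≠ o) (hjo : j ≠ o)
    (hσ : (σ : Mat n R) o ν = 0) (c b : R) :
    IsProdConj 4 σ (1 + vecMulVec (fun p => (σ : Mat n R) p ν)
      (Pi.single o (c * (↑σ⁻¹ : Mat n R) o j * b))) := by
  set A := trvUnit ν o hνo c
  set Q := trvUnit j o hjo b
  have hAQ : Commute A Q := Units.ext <| by
    simp only [A, Q, Units.val_mul, val_trvUnit, trv, add_mul, mul_add, one_mul, mul_one,
      single_mul_single_of_ne _ _ _ _ hjo.symm, single_mul_single_of_ne _ _ _ _ hνo.symm]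
    abel
  have hP : ((σ * A * σ⁻¹ : (Mat n R)ˣ) : Mat n R) =
      1 + vecMulVec (↑σ *ᵥ Pi.single ν c) (Pi.single o 1 ᵥ* ↑σ⁻¹) := by
    simpa [A, trv, single_eq_vecMulVec] using
      val_inv_mul_one_add_vecMulVec_mul σ⁻¹ (Pi.single ν c) (Pi.single o 1)
  have hQ : (Q : Mat n R) = 1 + vecMulVec (Pi.single j b) (Pi.single o 1) := by
    simp [Q, trv, single_eq_vecMulVec]
  have h := isProdConj_four_commutator (σ := σ) (trvUnit_mem_En ν o hνo c)
    (trvUnit_mem_En j o hjo b) hAQ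
  rw [Units.val_commutator_eq_one_add_mul hP hQ, vecMulVec_mul_vecMulVec] at h
  · convert h using 2
    ext p q
    by_cases hq : q = o <;> simp [vecMulVec_apply, hq, mul_assoc]
  · refine vecMulVec_mul_vecMulVec_of_dotProduct_eq_zero ?_
    rw [← dotProduct_mulVec, mulVec_mulVec, Units.inv_mul, one_mulVec]
    simp [hνo.symm]
  · exact vecMulVec_mul_vecMulVec_of_dotProduct_eq_zero (by simp [hjo.symm])
  · exact vecMulVec_mul_vecMulVec_of_dotProduct_eq_zero (by simp [hσ])

open MulOpposite in
theorem isProdConj_eight_trv_of_apply_eq_zero {o ν j k : Fin n} (hνo : ν ≠ o) (hjo : j ≠ o)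
    (hko : k ≠ o) (hσ : (σ : Mat n R) o ν = 0) (a b : R) :
    IsProdConj 8 σ (trv k o (a * (↑σ⁻¹ : Mat n R) o j * b)) := by
  set x : Fin n → R := fun p => (σ : Mat n R) p ν
  set u := Function.update ((↑σ⁻¹ : Mat n R) ν) o 0
  have hux : u ⬝ᵥ x = 1 := by
    calc u ⬝ᵥ x = (↑σ⁻¹ : Mat n R) ν ⬝ᵥ x :=
          Finset.sum_congr rfl fun p _ => by by_cases hp : p = o <;> simp [u, x, hp, hσ]
      _ = 1 := by rw [← mul_apply', Units.inv_mul, one_apply_eq]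
  obtain ⟨E, hE, hEconj⟩ := exists_mem_En_conj_one_add_vecMulVec_single hko hσ
    (Function.update_self o 0 _) hux a
  have h := (isProdConj_four_one_add_vecMulVec hνo hjo hσ (u k * a - 1) b).mul
    ((isProdConj_four_one_add_vecMulVec hνo hjo hσ 1 b).conj (inv_mem hE))
  rw [inv_inv, hEconj, one_add_vecMulVec_mul_one_add_vecMulVec (by simp [x, hσ, hko.symm])] at h
  convert h using 1
  rw [trv, add_assoc, single_eq_vecMulVec]
  congr 1
  ext p q
  by_cases hq : q = o <;> by_cases hp : p = k <;> simp [x, vecMulVec_apply, hq, hp] <;>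
    noncomm_ring

theorem isProdConj_trv_of_forall_col {m : ℕ} {o : Fin n} {x : R}
    (hx : ∀ k ≠ o, IsProdConj m σ (trv k o x)) (hnx : ∀ k ≠ o, IsProdConj m σ (trv k o (-x)))
    {k l : Fin n} (hkl : k ≠ l) : IsProdConj m σ (trv k l x) := by
  rcases eq_or_ne l o with rfl | hlo
  · exact hx k hkl
  have hconj : ∀ k' y, (((weylUnit (R := R) o l hlo.symm)⁻¹ : (Mat n R)ˣ) : Mat n R) *
      trv k' o y * (weylUnit (R := R) o l hlo.symm : Mat n R) =
        1 + vecMulVec ((((weylUnit o l hlo.symm)⁻¹ : (Mat n R)ˣ) : Mat n R) *ᵥ Pi.single k' y)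
          (Pi.single l 1) := fun k' y => by
    rw [trv, single_eq_vecMulVec, val_inv_mul_one_add_vecMulVec_mul, single_vecMul_weylUnit]
  by_cases hko : k = o
  · subst hko
    have h := (hnx l hlo).conj (weylUnit_mem_En k l hkl)
    rwa [hconj, weylUnit_inv_mulVec_single_right, neg_neg, ← single_eq_vecMulVec] at h
  · have h := (hx k hko).conj (weylUnit_mem_En o l hlo.symm)
    rwa [hconj, weylUnit_inv_mulVec_single_of_ne _ hko hkl, ← single_eq_vecMulVec] at h

end IsProdConj

theorem stmt4 {R : Type*} [Ring R] {n : ℕ} (hn : 3 ≤ n)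
    (σ : (Mat n R)ˣ)
    (h1n : σ.val ⟨0, by omega⟩ ⟨n - 1, by omega⟩ = 0)
    (j : Fin n) (hj : 1 ≤ j.val)
    (k l : Fin n) (hkl : k ≠ l) (a b : R) :
    IsProdConj 8 σ (trv k l (a * σ⁻¹.val ⟨0, by omega⟩ j * b)) := by
  have hνo : (⟨n - 1, by omega⟩ : Fin n) ≠ ⟨0, by omega⟩ := Fin.ne_of_val_ne (by simp; omega)
  have hjo : j ≠ ⟨0, by omega⟩ := Fin.ne_of_val_ne (by simp; omega)
  refine isProdConj_trv_of_forall_col (o := ⟨0, by omega⟩) (fun k hk => ?_) (fun k hk => ?_) hkl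
  · exact isProdConj_eight_trv_of_apply_eq_zero hνo hjo hk h1n a b
  · simpa using isProdConj_eight_trv_of_apply_eq_zero hνo hjo hk h1n (-a) b
end

section
/- Let 1 ≤ m < n, let σ ∈ GL_n(R), and suppose there is τ ∈ E_m(R), identified with its image in GL_n(R) under the embedding τ ↦ diag(e_{(n-m)×(n-m)}, τ) into the lower-right m×m block, such that (στ)_{1n} = 0. Then for any indices k ≠ l and any a, b ∈ R: (i) if j ∈ {2, …, n−m}, the elementary transvection t_{kl}(a σ'_{1j} b) is a product of 8 elements, each an E_n(R)-conjugate of σ or of σ^{-1}; and (ii) if j ∈ {n−m+1, …, n}, then t_{kl}(a σ'_{1j} b) is a product of 8m elements, each an E_n(R)-conjugate of σ or of σ^{-1}. -/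
open Matrix

/-- The embedding of m×m matrices into n×n matrices as the lower-right m×m block,
with the identity block in the upper left. -/
def embMat {m n : ℕ} {R : Type*} [Ring R] (hmn : m ≤ n) (A : Mat m R) : Mat n R :=
  fun i j =>
    if hi : n - m ≤ i.val then
      if hj : n - m ≤ j.val then
        A ⟨i.val - (n - m), by have := i.isLt; omega⟩ ⟨j.val - (n - m), by have := j.isLt; omega⟩
      else 0
    else if i = j then 1 else 0

namespace S14Aux

variable {R : Type*} [Ring R] {n : ℕ}

/-- rank-one matrix u ⊗ s -/
def rk (u s : Fin n → R) : Mat n R := Matrix.of fun i j => u i * s j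

/-- vector supported at a single index -/
def sing (i : Fin n) (c : R) : Fin n → R := fun p => if p = i then c else 0

@[simp] lemma sing_apply_self (i : Fin n) (c : R) : sing i c i = c := by simp [sing]

lemma sing_apply_ne {i p : Fin n} (h : p ≠ i) (c : R) : sing i c p = 0 := by simp [sing, h]

lemma rk_apply (u s : Fin n → R) (i j : Fin n) : rk u s i j = u i * s j := rfl

lemma rk_mul_rk (u s v t : Fin n → R) :
    rk u s * rk v t = rk (fun i => u i * (s ⬝ᵥ v)) t := by
  ext i j
  simp only [rk, mul_apply, of_apply, dotProduct, Finset.mul_sum, Finset.sum_mul, mul_assoc]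

lemma mul_rk (A : Mat n R) (u s : Fin n → R) :
    A * rk u s = rk (A.mulVec u) s := by
  ext i j
  simp only [rk, mul_apply, of_apply, mulVec, dotProduct, Finset.sum_mul, mul_assoc]

lemma rk_mul (u s : Fin n → R) (A : Mat n R) :
    rk u s * A = rk u (vecMul s A) := by
  ext i j
  simp only [rk, mul_apply, of_apply, vecMul, dotProduct, Finset.mul_sum, mul_assoc]

lemma rk_add_right (u s t : Fin n → R) :
    rk u (fun j => s j + t j) = rk u s + rk u t := by
  ext i j; simp [rk, mul_add]

lemma rk_sub_left (u v s : Fin n → R) :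
    rk (fun i => u i - v i) s = rk u s - rk v s := by
  ext i j; simp [rk, sub_mul]

lemma rk_zero_right (u : Fin n → R) : rk u (fun _ => 0) = 0 := by
  ext i j; simp [rk]

lemma rk_zero_left (s : Fin n → R) : rk (fun _ => 0) s = 0 := by
  ext i j; simp [rk]

/-- absorb a right scalar of the column into the row -/
lemma rk_absorb (u s : Fin n → R) (c : R) :
    rk (fun i => u i * c) s = rk u (fun j => c * s j) := by
  ext i j; simp [rk, mul_assoc]

lemma sing_smul_left (i : Fin n) (c x : R) :
    (fun j => c * sing i x j) = sing i (c * x) := by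
  funext j; by_cases h : j = i <;> simp [sing, h]

lemma sing_add (i : Fin n) (x y : R) :
    (fun j => sing i x j + sing i y j) = sing i (x + y) := by
  funext j; by_cases h : j = i <;> simp [sing, h]

@[simp] lemma sing_dot (i : Fin n) (c : R) (v : Fin n → R) :
    sing i c ⬝ᵥ v = c * v i := by
  simp only [dotProduct, sing]
  rw [Finset.sum_eq_single i] <;> simp +contextual

@[simp] lemma dot_sing (v : Fin n → R) (i : Fin n) (c : R) :
    v ⬝ᵥ sing i c = v i * c := by
  simp only [dotProduct, sing]
  rw [Finset.sum_eq_single i] <;> simp +contextual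

lemma smul_dot (c : R) (w v : Fin n → R) :
    (fun j => c * w j) ⬝ᵥ v = c * (w ⬝ᵥ v) := by
  simp [dotProduct, Finset.mul_sum, mul_assoc]

lemma dot_smul (v u : Fin n → R) (c : R) :
    v ⬝ᵥ (fun i => u i * c) = (v ⬝ᵥ u) * c := by
  simp [dotProduct, Finset.sum_mul, mul_assoc]

lemma sing_vecMul (i : Fin n) (c : R) (A : Mat n R) :
    vecMul (sing i c) A = fun j => c * A i j := by
  funext j
  simp only [vecMul, dotProduct, sing]
  rw [Finset.sum_eq_single i] <;> simp +contextual

lemma trv_eq_rk (i j : Fin n) (x : R) : trv i j x = 1 + rk (sing i 1) (sing j x) := by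
  unfold trv
  congr 1
  ext p q
  by_cases hp : p = i <;> by_cases hq : q = j <;>
    simp [rk, sing, Matrix.single_apply, hp, hq] <;> aesop

/-- unit of the form 1 + u⊗s with s·u = 0 -/
def uRk (u s : Fin n → R) (h : s ⬝ᵥ u = 0) : (Mat n R)ˣ where
  val := 1 + rk u s
  inv := 1 - rk u s
  val_inv := by
    have hz : rk u s * rk u s = 0 := by
      rw [rk_mul_rk]
      have : (fun i => u i * (s ⬝ᵥ u)) = fun _ => (0 : R) := by
        funext i; rw [h, mul_zero]
      rw [this, rk_zero_left]
    noncomm_ring [hz]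
  inv_val := by
    have hz : rk u s * rk u s = 0 := by
      rw [rk_mul_rk]
      have : (fun i => u i * (s ⬝ᵥ u)) = fun _ => (0 : R) := by
        funext i; rw [h, mul_zero]
      rw [this, rk_zero_left]
    noncomm_ring [hz]

@[simp] lemma uRk_val (u s : Fin n → R) (h) : (uRk u s h).val = 1 + rk u s := rfl
@[simp] lemma uRk_inv (u s : Fin n → R) (h) : (uRk u s h).inv = 1 - rk u s := rfl

end S14Aux
namespace S14Aux

variable {R : Type*} [Ring R] {n : ℕ}

lemma dot_sing_zero_of_ne {j i : Fin n} (x : R) (v : Fin n → R) (h : v j = 0) :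
    sing j x ⬝ᵥ v = 0 := by rw [sing_dot, h, mul_zero]

/-- elementary transvection as a unit -/
def tunit (i j : Fin n) (hij : i ≠ j) (x : R) : (Mat n R)ˣ :=
  uRk (sing i 1) (sing j x) (by
    rw [sing_dot, sing_apply_ne (Ne.symm hij), mul_zero])

lemma tunit_val (i j : Fin n) (hij : i ≠ j) (x : R) :
    (tunit i j hij x).val = trv i j x := by
  rw [trv_eq_rk]; rfl

lemma tunit_mem (i j : Fin n) (hij : i ≠ j) (x : R) :
    tunit i j hij x ∈ En n R := by
  apply Subgroup.subset_closure
  exact ⟨i, j, hij, x, tunit_val i j hij x⟩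

lemma mem_of_val_eq {g h : (Mat n R)ˣ} (hval : g.val = h.val) (hg : g ∈ En n R) :
    h ∈ En n R := by
  have : g = h := Units.ext hval
  rwa [this] at hg

/-- column-type unipotent 1 + w ⊗ e_{i₀} with w i₀ = 0 is in En -/
lemma col_mem_aux (i₀ : Fin n) :
    ∀ S : Finset (Fin n), i₀ ∉ S → ∀ w : Fin n → R, (∀ i, i ∉ S → w i = 0) →
      ∀ g : (Mat n R)ˣ, g.val = 1 + rk w (sing i₀ 1) → g ∈ En n R := by
  intro S
  induction S using Finset.induction_on with
  | empty =>
      intro _ w hw g hg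
      have hw0 : w = fun _ => 0 := by funext i; exact hw i (by simp)
      have : g = 1 := by
        apply Units.ext
        rw [hg, hw0, rk_zero_left, add_zero, Units.val_one]
      rw [this]; exact one_mem _
  | @insert a S ha ih =>
      intro hins w hw g hg
      have hai : a ≠ i₀ := by rintro rfl; exact hins (Finset.mem_insert_self _ _)
      have hi₀S : i₀ ∉ S := fun h => hins (Finset.mem_insert_of_mem h)
      set w' : Fin n → R := fun i => if i = a then 0 else w i with hw'def
      have hw'S : ∀ i, i ∉ S → w' i = 0 := by
        intro i hi
        by_cases h : i = a
        · simp [hw'def, h]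
        · simp only [hw'def, if_neg h]
          exact hw i (by simp [h, hi])
      have hw'i₀ : (sing i₀ 1 : Fin n → R) ⬝ᵥ w' = 0 := by
        rw [sing_dot, hw'S i₀ hi₀S, mul_zero]
      have hmem' : uRk w' (sing i₀ 1) hw'i₀ ∈ En n R :=
        ih hi₀S w' hw'S _ rfl
      have hgprod : g = uRk w' (sing i₀ 1) hw'i₀ * tunit a i₀ hai (w a) := by
        apply Units.ext
        rw [hg, Units.val_mul, uRk_val]
        have : (tunit a i₀ hai (w a)).val = 1 + rk (sing a 1) (sing i₀ (w a)) := rfl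
        rw [this]
        have hcross : rk w' (sing i₀ 1) * rk (sing a 1) (sing i₀ (w a)) = 0 := by
          rw [rk_mul_rk]
          have : (sing i₀ 1 : Fin n → R) ⬝ᵥ sing a 1 = 0 := by
            rw [sing_dot, sing_apply_ne (Ne.symm hai), mul_zero]
          rw [this]
          have : (fun i => w' i * (0:R)) = fun _ => (0:R) := by funext i; rw [mul_zero]
          rw [this, rk_zero_left]
        have hsum : rk w' (sing i₀ 1) + rk (sing a 1) (sing i₀ (w a)) = rk w (sing i₀ 1) := by
          ext i j
          by_cases hia : i = a <;> by_cases hji : j = i₀ <;>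
            simp [rk, sing, hw'def, hia, hji, hai]
        noncomm_ring [hcross, hsum]
      rw [hgprod]
      exact mul_mem hmem' (tunit_mem a i₀ hai (w a))

lemma col_mem (i₀ : Fin n) (w : Fin n → R) (hw : w i₀ = 0) (g : (Mat n R)ˣ)
    (hg : g.val = 1 + rk w (sing i₀ 1)) : g ∈ En n R := by
  apply col_mem_aux i₀ (Finset.univ.erase i₀) (by simp) w _ g hg
  intro i hi
  have : i = i₀ := by
    by_contra h
    exact hi (by simp [Finset.mem_erase, h])
  rwa [this]

/-- row-type unipotent 1 + e_{i₀} ⊗ s with s i₀ = 0 is in En -/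
lemma row_mem_aux (i₀ : Fin n) :
    ∀ S : Finset (Fin n), i₀ ∉ S → ∀ s : Fin n → R, (∀ i, i ∉ S → s i = 0) →
      ∀ g : (Mat n R)ˣ, g.val = 1 + rk (sing i₀ 1) s → g ∈ En n R := by
  intro S
  induction S using Finset.induction_on with
  | empty =>
      intro _ s hs g hg
      have hs0 : s = fun _ => 0 := by funext i; exact hs i (by simp)
      have : g = 1 := by
        apply Units.ext
        rw [hg, hs0, rk_zero_right, add_zero, Units.val_one]
      rw [this]; exact one_mem _
  | @insert a S ha ih =>
      intro hins s hs g hg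
      have hai : i₀ ≠ a := by rintro rfl; exact hins (Finset.mem_insert_self _ _)
      have hi₀S : i₀ ∉ S := fun h => hins (Finset.mem_insert_of_mem h)
      set s' : Fin n → R := fun i => if i = a then 0 else s i with hs'def
      have hs'S : ∀ i, i ∉ S → s' i = 0 := by
        intro i hi
        by_cases h : i = a
        · simp [hs'def, h]
        · simp only [hs'def, if_neg h]
          exact hs i (by simp [h, hi])
      have hs'i₀ : s' ⬝ᵥ (sing i₀ 1 : Fin n → R) = 0 := by
        rw [dot_sing, hs'S i₀ hi₀S, zero_mul]
      have hmem' : uRk (sing i₀ 1) s' hs'i₀ ∈ En n R :=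
        ih hi₀S s' hs'S _ rfl
      have hgprod : g = uRk (sing i₀ 1) s' hs'i₀ * tunit i₀ a hai (s a) := by
        apply Units.ext
        rw [hg, Units.val_mul, uRk_val]
        have htv : (tunit i₀ a hai (s a)).val = 1 + rk (sing i₀ 1) (sing a (s a)) := rfl
        rw [htv]
        have hcross : rk (sing i₀ 1) s' * rk (sing i₀ 1) (sing a (s a)) = 0 := by
          rw [rk_mul_rk]
          have h1 : s' ⬝ᵥ (sing i₀ 1 : Fin n → R) = 0 := hs'i₀
          rw [h1]
          have : (fun i => sing i₀ (1:R) i * (0:R)) = fun _ => (0:R) := by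
            funext i; rw [mul_zero]
          rw [this, rk_zero_left]
        have hsum : rk (sing i₀ 1) s' + rk (sing i₀ 1) (sing a (s a)) = rk (sing i₀ 1) s := by
          ext i j
          by_cases hia : i = i₀ <;> by_cases hja : j = a <;>
            simp [rk, sing, hs'def, hia, hja]
        noncomm_ring [hcross, hsum]
      rw [hgprod]
      exact mul_mem hmem' (tunit_mem i₀ a hai (s a))

lemma row_mem (i₀ : Fin n) (s : Fin n → R) (hs : s i₀ = 0) (g : (Mat n R)ˣ)
    (hg : g.val = 1 + rk (sing i₀ 1) s) : g ∈ En n R := by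
  apply row_mem_aux i₀ (Finset.univ.erase i₀) (by simp) s _ g hg
  intro i hi
  have : i = i₀ := by
    by_contra h
    exact hi (by simp [Finset.mem_erase, h])
  rwa [this]

end S14Aux
namespace S14Aux

variable {R : Type*} [Ring R] {n : ℕ}

/-- Vaserstein-type membership: 1 + E ⊗ s ∈ En when s·E = 0 and both vanish at i₀. -/
lemma vaserstein_mem (i₀ : Fin n) (E s : Fin n → R) (hE : E i₀ = 0) (hs : s i₀ = 0)
    (hd : s ⬝ᵥ E = 0) (g : (Mat n R)ˣ) (hg : g.val = 1 + rk E s) : g ∈ En n R := by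
  have hcol : (sing i₀ 1 : Fin n → R) ⬝ᵥ E = 0 := by
    rw [sing_dot, hE, mul_zero]
  have hrow : s ⬝ᵥ (sing i₀ 1 : Fin n → R) = 0 := by
    rw [dot_sing, hs, zero_mul]
  set gc := uRk E (sing i₀ 1) hcol with hgc
  set gr := uRk (sing i₀ 1) s hrow with hgr
  have hval : (gc * gr * gc⁻¹ * gr⁻¹).val = 1 + rk E s := by
    rw [Units.val_mul, Units.val_mul, Units.val_mul]
    have h1 : (gc⁻¹).val = 1 - rk E (sing i₀ 1) := rfl
    have h2 : (gr⁻¹).val = 1 - rk (sing i₀ 1) s := rfl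
    rw [h1, h2, hgc, hgr, uRk_val, uRk_val]
    -- atoms
    set A := rk E (sing i₀ 1) with hA
    set B := rk (sing i₀ 1) s with hB
    have hAB : A * B = rk E s := by
      rw [hA, hB, rk_mul_rk, sing_dot, sing_apply_self]
      have : (fun i => E i * (1 * 1 : R)) = E := by funext i; rw [one_mul, mul_one]
      rw [this]
    have hBA : B * A = 0 := by
      rw [hA, hB, rk_mul_rk, hd]
      have : (fun i => sing i₀ (1:R) i * (0:R)) = fun _ => (0:R) := by
        funext i; rw [mul_zero]
      rw [this, rk_zero_left]
    have hAA : A * A = 0 := by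
      rw [hA, rk_mul_rk, hcol]
      have : (fun i => E i * (0:R)) = fun _ => (0:R) := by funext i; rw [mul_zero]
      rw [this, rk_zero_left]
    have hBB : B * B = 0 := by
      rw [hB, rk_mul_rk, hrow]
      have : (fun i => sing i₀ (1:R) i * (0:R)) = fun _ => (0:R) := by
        funext i; rw [mul_zero]
      rw [this, rk_zero_left]
    have hABA : rk E s * A = 0 := by
      rw [hA, rk_mul_rk]
      have h0 : s ⬝ᵥ E = 0 := hd
      rw [h0]
      have : (fun i => E i * (0:R)) = fun _ => (0:R) := by funext i; rw [mul_zero]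
      rw [this, rk_zero_left]
    have hABB : rk E s * B = 0 := by
      rw [hB, rk_mul_rk, hrow]
      have : (fun i => E i * (0:R)) = fun _ => (0:R) := by funext i; rw [mul_zero]
      rw [this, rk_zero_left]
    set C := rk E s with hC
    have e1 : (1 + A) * (1 + B) = 1 + A + B + C := by noncomm_ring [hAB]
    have e2 : (1 + A + B + C) * (1 - A) = 1 + B + C := by noncomm_ring [hAA, hBA, hABA]
    have e3 : (1 + B + C) * (1 - B) = 1 + C := by noncomm_ring [hBB, hABB]
    calc (1 + A) * (1 + B) * (1 - A) * (1 - B)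
        = ((1 + A) * (1 + B)) * (1 - A) * (1 - B) := by noncomm_ring
      _ = (1 + A + B + C) * (1 - A) * (1 - B) := by rw [e1]
      _ = (1 + B + C) * (1 - B) := by rw [e2]
      _ = 1 + C := e3
  apply mem_of_val_eq (hval.trans hg.symm)
  exact mul_mem (mul_mem (mul_mem
    (col_mem i₀ E hE _ rfl) (row_mem i₀ s hs _ rfl))
    (inv_mem (col_mem i₀ E hE _ rfl))) (inv_mem (row_mem i₀ s hs _ rfl))

end S14Aux
namespace S14Aux

variable {R : Type*} [Ring R] {n : ℕ}

lemma isProdConj_mul {c₁ c₂ : ℕ} {σ : (Mat n R)ˣ} {A B : Mat n R}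
    (h₁ : IsProdConj c₁ σ A) (h₂ : IsProdConj c₂ σ B) :
    IsProdConj (c₁ + c₂) σ (A * B) := by
  obtain ⟨g₁, hg₁, hp₁⟩ := h₁
  obtain ⟨g₂, hg₂, hp₂⟩ := h₂
  refine ⟨Fin.append g₁ g₂, ?_, ?_⟩
  · intro p
    refine Fin.addCases (fun i => ?_) (fun j => ?_) p
    · rw [Fin.append_left]; exact hg₁ i
    · rw [Fin.append_right]; exact hg₂ j
  · rw [List.ofFn_add]
    simp only [Fin.append_left, Fin.append_right]
    have hfa : (fun i : Fin c₁ => Fin.append g₁ g₂ (Fin.castLE (by omega) i)) = g₁ :=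
      funext fun i => Fin.append_left g₁ g₂ i
    rw [List.prod_append, Units.val_mul, hfa, hp₁, hp₂]

lemma isProdConj_pad {c : ℕ} {σ : (Mat n R)ˣ} {A : Mat n R}
    (h : IsProdConj c σ A) : IsProdConj (c + 2) σ A := by
  have h2 : IsProdConj 2 σ (1 : Mat n R) := by
    refine ⟨![σ, σ⁻¹], ?_, ?_⟩
    · intro p
      fin_cases p
      · exact ⟨1, one_mem _, Or.inl (by simp)⟩
      · exact ⟨1, one_mem _, Or.inr (by simp)⟩
    · simp
  have := isProdConj_mul h h2
  rwa [mul_one] at this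

lemma isProdConj_pad_many {c : ℕ} {σ : (Mat n R)ˣ} {A : Mat n R}
    (h : IsProdConj c σ A) (t : ℕ) : IsProdConj (c + 2 * t) σ A := by
  induction t with
  | zero => simpa using h
  | succ t ih =>
      have hc : c + 2 * (t + 1) = (c + 2 * t) + 2 := by ring
      rw [hc]
      exact isProdConj_pad ih

lemma isProdConj_conj {c : ℕ} {σ : (Mat n R)ˣ} {A : Mat n R} (h : IsProdConj c σ A)
    (π : (Mat n R)ˣ) (hπ : π ∈ En n R) : IsProdConj c σ (π.inv * A * π.val) := by
  obtain ⟨g, hg, hp⟩ := h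
  refine ⟨fun p => π⁻¹ * g p * π, ?_, ?_⟩
  · intro p
    obtain ⟨ξ, hξ, hcase⟩ := hg p
    refine ⟨ξ * π, mul_mem hξ hπ, ?_⟩
    rcases hcase with hc | hc
    · left; show π⁻¹ * g p * π = _; rw [hc]; group
    · right; show π⁻¹ * g p * π = _; rw [hc]; group
  · have hfun : (fun p => π⁻¹ * g p * π) = (fun x => π⁻¹ * x * π) ∘ g := rfl
    rw [hfun, ← List.map_ofFn]
    have hmap : ∀ L : List (Mat n R)ˣ,
        (List.map (fun x => π⁻¹ * x * π) L).prod = π⁻¹ * L.prod * π := by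
      intro L
      induction L with
      | nil => simp
      | cons a l ihl =>
          simp only [List.map_cons, List.prod_cons, ihl]
          group
    rw [hmap, Units.val_mul, Units.val_mul, hp]
    rfl

end S14Aux
namespace S14Aux

variable {R : Type*} [Ring R] {m n : ℕ}

lemma embMat_apply_nonblock (hmn : m ≤ n) (A : Mat m R) {i : Fin n} (hi : i.val < n - m)
    (j : Fin n) : embMat hmn A i j = if i = j then 1 else 0 := by
  unfold embMat
  rw [dif_neg (by omega)]

/-- the index equivalence splitting Fin n into the first n-m and last m indices -/
noncomputable def embEquiv (hmn : m ≤ n) : Fin n ≃ (Fin (n - m) ⊕ Fin m) :=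
  (finCongr (by omega : n = (n - m) + m)).trans finSumFinEquiv.symm

lemma embEquiv_apply_lt (hmn : m ≤ n) {i : Fin n} (hi : i.val < n - m) :
    embEquiv hmn i = Sum.inl ⟨i.val, hi⟩ := by
  simp only [embEquiv, Equiv.trans_apply]
  rw [Equiv.symm_apply_eq, finSumFinEquiv_apply_left]
  apply Fin.ext; simp

lemma embEquiv_apply_ge (hmn : m ≤ n) {i : Fin n} (hi : n - m ≤ i.val) :
    embEquiv hmn i = Sum.inr ⟨i.val - (n - m), by have := i.isLt; omega⟩ := by
  simp only [embEquiv, Equiv.trans_apply]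
  rw [Equiv.symm_apply_eq, finSumFinEquiv_apply_right]
  apply Fin.ext; simp; omega

lemma embMat_eq_submatrix (hmn : m ≤ n) (A : Mat m R) :
    embMat hmn A = (Matrix.fromBlocks (1 : Matrix (Fin (n - m)) (Fin (n - m)) R) 0 0 A).submatrix
      (embEquiv hmn) (embEquiv hmn) := by
  ext i j
  rcases lt_or_ge i.val (n - m) with hi | hi
  · rcases lt_or_ge j.val (n - m) with hj | hj
    · rw [embMat_apply_nonblock hmn A hi j, Matrix.submatrix_apply,
        embEquiv_apply_lt hmn hi, embEquiv_apply_lt hmn hj]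
      simp only [Matrix.fromBlocks_apply₁₁, Matrix.one_apply]
      by_cases h : i = j
      · rw [if_pos h, if_pos (by subst h; rfl)]
      · rw [if_neg h, if_neg (fun hc => h (Fin.ext (by simpa using congrArg Fin.val hc)))]
    · rw [embMat_apply_nonblock hmn A hi j, Matrix.submatrix_apply,
        embEquiv_apply_lt hmn hi, embEquiv_apply_ge hmn hj]
      simp only [Matrix.fromBlocks_apply₁₂, Matrix.zero_apply]
      rw [if_neg]
      rintro rfl; omega
  · rcases lt_or_ge j.val (n - m) with hj | hj
    · rw [Matrix.submatrix_apply, embEquiv_apply_ge hmn hi, embEquiv_apply_lt hmn hj]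
      simp only [Matrix.fromBlocks_apply₂₁, Matrix.zero_apply]
      unfold embMat
      rw [dif_pos hi, dif_neg (by omega)]
    · rw [Matrix.submatrix_apply, embEquiv_apply_ge hmn hi, embEquiv_apply_ge hmn hj]
      simp only [Matrix.fromBlocks_apply₂₂]
      unfold embMat
      rw [dif_pos hi, dif_pos hj]

lemma embMat_mul (hmn : m ≤ n) (A B : Mat m R) :
    embMat hmn A * embMat hmn B = embMat hmn (A * B) := by
  rw [embMat_eq_submatrix hmn A, embMat_eq_submatrix hmn B, embMat_eq_submatrix hmn (A * B),
    Matrix.submatrix_mul_equiv, Matrix.fromBlocks_multiply]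
  congr 1 <;> simp

lemma embMat_one (hmn : m ≤ n) : embMat hmn (1 : Mat m R) = (1 : Mat n R) := by
  rw [embMat_eq_submatrix hmn 1]
  have : Matrix.fromBlocks (1 : Matrix (Fin (n - m)) (Fin (n - m)) R) 0 0 (1 : Mat m R) = 1 :=
    Matrix.fromBlocks_one
  rw [this, Matrix.submatrix_one_equiv]

end S14Aux
namespace S14Aux

variable {R : Type*} [Ring R] {n : ℕ}

lemma rk_collapse_zero (u s v t : Fin n → R) (h : s ⬝ᵥ v = 0) : rk u s * rk v t = 0 := by
  rw [rk_mul_rk, h]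
  have : (fun i => u i * (0:R)) = fun _ => (0:R) := by funext i; rw [mul_zero]
  rw [this, rk_zero_left]

lemma rk_sing_normalize (u : Fin n → R) (i0 : Fin n) (x : R) :
    rk u (sing i0 x) = rk (fun i => u i * x) (sing i0 1) := by
  rw [rk_absorb, sing_smul_left, mul_one]

/-- the scalar x * (r ⬝ᵥ D) * y transvection-ready 4-conjugate element -/
lemma four_lemma (σ : (Mat n R)ˣ) (i0 : Fin n) (d D u r : Fin n → R)
    (hu : u = σ.val.mulVec d) (hr : r = fun j => σ⁻¹.val i0 j)
    (hd0 : d i0 = 0) (hD0 : D i0 = 0) (hu0 : u i0 = 0) (hru : r ⬝ᵥ u = 0)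
    (x y : R) :
    IsProdConj 4 σ (1 - rk u (sing i0 (x * (r ⬝ᵥ D) * y))) := by
  -- the two elementary conjugators
  have hs1d : (sing i0 x : Fin n → R) ⬝ᵥ d = 0 := by rw [sing_dot, hd0, mul_zero]
  have hs2D : (sing i0 y : Fin n → R) ⬝ᵥ D = 0 := by rw [sing_dot, hD0, mul_zero]
  set e1 : (Mat n R)ˣ := uRk d (sing i0 x) hs1d with he1def
  set e2 : (Mat n R)ˣ := uRk D (sing i0 y) hs2D with he2def
  have he1 : e1 ∈ En n R := by
    apply col_mem i0 (fun i => d i * x) (by show d i0 * x = 0; rw [hd0, zero_mul])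
    rw [he1def, uRk_val, rk_sing_normalize]
  have he2 : e2 ∈ En n R := by
    apply col_mem i0 (fun i => D i * y) (by show D i0 * y = 0; rw [hD0, zero_mul])
    rw [he2def, uRk_val, rk_sing_normalize]
  -- the four factors
  set g0 : (Mat n R)ˣ := e1 * σ * e1⁻¹ with hg0
  set g1 : (Mat n R)ˣ := σ⁻¹ with hg1
  set g2 : (Mat n R)ˣ := e2 * σ * e2⁻¹ with hg2
  set g3 : (Mat n R)ˣ := (e2 * e1) * σ⁻¹ * (e2 * e1)⁻¹ with hg3
  refine ⟨![g0, g1, g2, g3], ?_, ?_⟩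
  · intro p
    fin_cases p
    · refine ⟨e1⁻¹, inv_mem he1, Or.inl ?_⟩
      show g0 = (e1⁻¹)⁻¹ * σ * e1⁻¹
      rw [inv_inv, hg0]
    · refine ⟨1, one_mem _, Or.inr ?_⟩
      show g1 = 1⁻¹ * σ⁻¹ * 1
      rw [hg1]; group
    · refine ⟨e2⁻¹, inv_mem he2, Or.inl ?_⟩
      show g2 = (e2⁻¹)⁻¹ * σ * e2⁻¹
      rw [inv_inv, hg2]
    · refine ⟨(e2 * e1)⁻¹, inv_mem (mul_mem he2 he1), Or.inr ?_⟩
      show g3 = ((e2 * e1)⁻¹)⁻¹ * σ⁻¹ * (e2 * e1)⁻¹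
      rw [inv_inv, hg3]
  · -- value computation
    have hlist : (List.ofFn ![g0, g1, g2, g3]).prod = g0 * g1 * g2 * g3 := by
      simp [List.ofFn_succ]
      group
    rw [hlist]
    have hgrp : g0 * g1 * g2 * g3 = (σ * e1 * σ⁻¹ * e1⁻¹)⁻¹ * (e2 * (σ * e1 * σ⁻¹ * e1⁻¹) * e2⁻¹) := by
      rw [hg0, hg1, hg2, hg3]; group
    rw [hgrp]
    -- abbreviations
    set rx : Fin n → R := fun j => x * r j with hrx
    set Ux : Mat n R := rk u rx with hUx
    set D1 : Mat n R := rk d (sing i0 x) with hD1x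
    set V : Mat n R := rk D (sing i0 y) with hVy
    set P : Mat n R := rk (fun i => u i * (rx ⬝ᵥ d)) (sing i0 x) with hPd
    set W2 : Mat n R := rk (fun i => u i * (x * (r ⬝ᵥ D))) (sing i0 y) with hW2d
    -- basic unit facts
    have hσσ : σ.val * σ⁻¹.val = 1 := by
      rw [← Units.val_mul, mul_inv_cancel, Units.val_one]
    have hvecr : ∀ c : R, vecMul (sing i0 c) σ⁻¹.val = fun j => c * r j := by
      intro c; rw [sing_vecMul, hr]
    -- sandwiches
    have hsw1 : σ.val * e1.val * σ⁻¹.val = 1 + Ux := by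
      have : e1.val = 1 + rk d (sing i0 x) := rfl
      rw [this, mul_add, mul_one, add_mul, hσσ, mul_rk, rk_mul, hvecr, ← hu, ← hrx, ← hUx]
    have hsw1' : σ.val * e1.inv * σ⁻¹.val = 1 - Ux := by
      have : e1.inv = 1 - rk d (sing i0 x) := rfl
      rw [this, mul_sub, mul_one, sub_mul, hσσ, mul_rk, rk_mul, hvecr, ← hu, ← hrx, ← hUx]
    -- dot product evaluations
    have hs1d' : (sing i0 x : Fin n → R) ⬝ᵥ d = 0 := hs1d
    have hs1D : (sing i0 x : Fin n → R) ⬝ᵥ D = 0 := by rw [sing_dot, hD0, mul_zero]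
    have hs1u : (sing i0 x : Fin n → R) ⬝ᵥ u = 0 := by rw [sing_dot, hu0, mul_zero]
    have hs2d : (sing i0 y : Fin n → R) ⬝ᵥ d = 0 := by rw [sing_dot, hd0, mul_zero]
    have hs2D' : (sing i0 y : Fin n → R) ⬝ᵥ D = 0 := hs2D
    have hs2u : (sing i0 y : Fin n → R) ⬝ᵥ u = 0 := by rw [sing_dot, hu0, mul_zero]
    have hrxu : rx ⬝ᵥ u = 0 := by rw [hrx, smul_dot, hru, mul_zero]
    have hs1uc : ∀ c : R, (sing i0 x : Fin n → R) ⬝ᵥ (fun i => u i * c) = 0 := by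
      intro c; rw [dot_smul, hs1u, zero_mul]
    have hs2uc : ∀ c : R, (sing i0 y : Fin n → R) ⬝ᵥ (fun i => u i * c) = 0 := by
      intro c; rw [dot_smul, hs2u, zero_mul]
    have hrxuc : ∀ c : R, rx ⬝ᵥ (fun i => u i * c) = 0 := by
      intro c; rw [dot_smul, hrxu, zero_mul]
    -- atom relations
    have rD1Ux : D1 * Ux = 0 := rk_collapse_zero _ _ _ _ hs1u
    have rD1D1 : D1 * D1 = 0 := rk_collapse_zero _ _ _ _ hs1d'
    have rD1V : D1 * V = 0 := rk_collapse_zero _ _ _ _ hs1D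
    have rD1P : D1 * P = 0 := rk_collapse_zero _ _ _ _ (hs1uc _)
    have rD1W2 : D1 * W2 = 0 := rk_collapse_zero _ _ _ _ (hs1uc _)
    have rUxUx : Ux * Ux = 0 := rk_collapse_zero _ _ _ _ hrxu
    have rUxD1 : Ux * D1 = P := by rw [hUx, hD1x, hPd, rk_mul_rk]
    have rUxP : Ux * P = 0 := rk_collapse_zero _ _ _ _ (hrxuc _)
    have rUxW2 : Ux * W2 = 0 := rk_collapse_zero _ _ _ _ (hrxuc _)
    have rUxV : Ux * V = W2 := by
      rw [hUx, hVy, hW2d, rk_mul_rk, hrx, smul_dot]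
    have rVUx : V * Ux = 0 := rk_collapse_zero _ _ _ _ hs2u
    have rVD1 : V * D1 = 0 := rk_collapse_zero _ _ _ _ hs2d
    have rVV : V * V = 0 := rk_collapse_zero _ _ _ _ hs2D'
    have rVP : V * P = 0 := rk_collapse_zero _ _ _ _ (hs2uc _)
    have rPV : P * V = 0 := rk_collapse_zero _ _ _ _ hs1D
    -- value of the sandwich product
    have hval : ((σ * e1 * σ⁻¹ * e1⁻¹)⁻¹ * (e2 * (σ * e1 * σ⁻¹ * e1⁻¹) * e2⁻¹)).val
        = (e1.val * (σ.val * e1.inv * σ⁻¹.val)) *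
          (e2.val * ((σ.val * e1.val * σ⁻¹.val) * e1.inv) * e2.inv) := by
      have hinv : (σ * e1 * σ⁻¹ * e1⁻¹)⁻¹ = e1 * σ * e1⁻¹ * σ⁻¹ := by group
      rw [hinv]
      simp only [Units.val_mul]
      have h1 : (e1⁻¹).val = e1.inv := rfl
      have h2 : (e2⁻¹).val = e2.inv := rfl
      rw [h1, h2]
      simp only [mul_assoc]
    rw [hval, hsw1, hsw1']
    have he1v : e1.val = 1 + D1 := rfl
    have he1i : e1.inv = 1 - D1 := rfl
    have he2v : e2.val = 1 + V := rfl
    have he2i : e2.inv = 1 - V := rfl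
    rw [he1v, he1i, he2v, he2i]
    -- the grind
    have st1 : (1 + D1) * (1 - Ux) = 1 + D1 - Ux := by noncomm_ring [rD1Ux]
    have st2 : (1 + Ux) * (1 - D1) = 1 + Ux - D1 - P := by noncomm_ring [rUxD1]
    have st3 : (1 + V) * (1 + Ux - D1 - P) = 1 + Ux - D1 - P + V := by
      noncomm_ring [rVUx, rVD1, rVP]
    have st4 : (1 + Ux - D1 - P + V) * (1 - V) = 1 + Ux - D1 - P - W2 := by
      noncomm_ring [rUxV, rD1V, rPV, rVV]
    have st5 : (1 + D1 - Ux) * (1 + Ux - D1 - P - W2) = 1 - W2 := by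
      noncomm_ring [rD1Ux, rD1D1, rD1P, rD1W2, rUxUx, rUxD1, rUxP, rUxW2]
    calc (1 + D1) * (1 - Ux) * ((1 + V) * ((1 + Ux) * (1 - D1)) * (1 - V))
        = (1 + D1 - Ux) * ((1 + V) * (1 + Ux - D1 - P) * (1 - V)) := by rw [st1, st2]
      _ = (1 + D1 - Ux) * ((1 + Ux - D1 - P + V) * (1 - V)) := by rw [st3]
      _ = (1 + D1 - Ux) * (1 + Ux - D1 - P - W2) := by rw [st4]
      _ = 1 - W2 := st5
      _ = 1 - rk u (sing i0 (x * (r ⬝ᵥ D) * y)) := by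
          rw [hW2d, rk_absorb, sing_smul_left]

end S14Aux
namespace S14Aux

variable {R : Type*} [Ring R] {n : ℕ}

lemma dot_sub (v f g : Fin n → R) :
    v ⬝ᵥ (fun i => f i - g i) = v ⬝ᵥ f - v ⬝ᵥ g := by
  simp [dotProduct, mul_sub, Finset.sum_sub_distrib]

lemma core_lemma (σ : (Mat n R)ˣ) (i0 k' : Fin n) (hk' : k' ≠ i0)
    (d D u r sh : Fin n → R)
    (hu : u = σ.val.mulVec d) (hr : r = fun j => σ⁻¹.val i0 j)
    (hd0 : d i0 = 0) (hD0 : D i0 = 0) (hu0 : u i0 = 0) (hru : r ⬝ᵥ u = 0)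
    (hsh0 : sh i0 = 0) (hshu : sh ⬝ᵥ u = 1) (a b : R) :
    IsProdConj 8 σ (trv k' i0 (a * (r ⬝ᵥ D) * b)) := by
  set E : Fin n → R := fun i => sing k' 1 i - u i * sh k' with hE
  have hE0 : E i0 = 0 := by
    show sing k' 1 i0 - u i0 * sh k' = 0
    rw [sing_apply_ne (Ne.symm hk'), hu0, zero_mul, sub_zero]
  have hshE : sh ⬝ᵥ E = 0 := by
    rw [hE, dot_sub, dot_sing, dot_smul, hshu, mul_one, one_mul, sub_self]
  set δ : (Mat n R)ˣ := uRk E sh hshE with hδdef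
  have hδ : δ ∈ En n R := vaserstein_mem i0 E sh hE0 hsh0 hshE δ rfl
  set t : R := r ⬝ᵥ D with ht
  set z2 : R := a * t * b with hz2
  set x1 : R := -(a + sh k' * a) with hx1
  set z1 : R := x1 * t * b with hz1
  have h4b : IsProdConj 4 σ (1 - rk u (sing i0 z2)) :=
    four_lemma σ i0 d D u r hu hr hd0 hD0 hu0 hru a b
  have h4a : IsProdConj 4 σ (1 - rk u (sing i0 z1)) :=
    four_lemma σ i0 d D u r hu hr hd0 hD0 hu0 hru x1 b
  have hB : IsProdConj 4 σ (δ.inv * (1 - rk u (sing i0 z2)) * δ.val) :=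
    isProdConj_conj h4b δ hδ
  have h8 : IsProdConj 8 σ
      ((1 - rk u (sing i0 z1)) * (δ.inv * (1 - rk u (sing i0 z2)) * δ.val)) :=
    isProdConj_mul h4a hB
  -- now identify the matrix
  have hmat : (1 - rk u (sing i0 z1)) * (δ.inv * (1 - rk u (sing i0 z2)) * δ.val)
      = trv k' i0 z2 := by
    set F : Mat n R := rk E sh with hF
    set M1 : Mat n R := rk u (sing i0 z1) with hM1
    set M2 : Mat n R := rk u (sing i0 z2) with hM2
    have hδv : δ.val = 1 + F := rfl
    have hδi : δ.inv = 1 - F := rfl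
    have hFF : F * F = 0 := rk_collapse_zero _ _ _ _ hshE
    have hFM : F * M2 = rk E (sing i0 z2) := by
      rw [hF, hM2, rk_mul_rk, hshu]
      have : (fun i => E i * (1:R)) = E := by funext i; rw [mul_one]
      rw [this]
    have hMF : M2 * F = 0 := by
      apply rk_collapse_zero
      rw [sing_dot, hE0, mul_zero]
    have hEF : rk E (sing i0 z2) * F = 0 := by
      apply rk_collapse_zero
      rw [sing_dot, hE0, mul_zero]
    have hM1M2 : M1 * M2 = 0 := by
      apply rk_collapse_zero
      rw [sing_dot, hu0, mul_zero]
    have hM1E : M1 * rk E (sing i0 z2) = 0 := by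
      apply rk_collapse_zero
      rw [sing_dot, hE0, mul_zero]
    have b1 : (1 - F) * (1 - M2) = 1 - F - M2 + rk E (sing i0 z2) := by
      noncomm_ring [hFM]
    have b2 : (1 - F - M2 + rk E (sing i0 z2)) * (1 + F) = 1 - M2 + rk E (sing i0 z2) := by
      noncomm_ring [hFF, hMF, hEF]
    have b3 : (1 - M1) * (1 - M2 + rk E (sing i0 z2))
        = 1 - M1 - M2 + rk E (sing i0 z2) := by
      noncomm_ring [hM1M2, hM1E]
    have hsplit : rk E (sing i0 z2)
        = rk (sing k' 1) (sing i0 z2) - rk u (sing i0 (sh k' * z2)) := by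
      rw [hE, rk_sub_left, rk_absorb, sing_smul_left]
    have hz0 : z1 + z2 + sh k' * z2 = 0 := by rw [hz1, hz2, hx1]; noncomm_ring
    have hcomb : M1 + M2 + rk u (sing i0 (sh k' * z2)) = 0 := by
      rw [hM1, hM2, ← rk_add_right, sing_add, ← rk_add_right, sing_add, hz0]
      have hs0 : sing i0 (0:R) = fun _ => (0:R) := by funext p; simp [sing]
      rw [hs0, rk_zero_right]
    calc (1 - M1) * (δ.inv * (1 - M2) * δ.val)
        = (1 - M1) * ((1 - F) * (1 - M2) * (1 + F)) := by rw [hδi, hδv]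
      _ = (1 - M1) * ((1 - F - M2 + rk E (sing i0 z2)) * (1 + F)) := by rw [b1]
      _ = (1 - M1) * (1 - M2 + rk E (sing i0 z2)) := by rw [b2]
      _ = 1 - M1 - M2 + rk E (sing i0 z2) := b3
      _ = 1 + rk (sing k' 1) (sing i0 z2) - (M1 + M2 + rk u (sing i0 (sh k' * z2))) := by
          rw [hsplit]; noncomm_ring
      _ = 1 + rk (sing k' 1) (sing i0 z2) := by rw [hcomb, sub_zero]
      _ = trv k' i0 z2 := (trv_eq_rk k' i0 z2).symm
  rw [← hmat]
  exact h8

end S14Aux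
namespace S14Aux

variable {R : Type*} [Ring R] {n : ℕ}

lemma rk_fun_one (u s : Fin n → R) : rk (fun i => u i * 1) s = rk u s := by
  ext i j; simp [rk]

lemma sing_dot_sing_ne {i0 j0 : Fin n} (h : i0 ≠ j0) (c c' : R) :
    (sing i0 c : Fin n → R) ⬝ᵥ sing j0 c' = 0 := by
  rw [sing_dot, sing_apply_ne h, mul_zero]

lemma rk_sing_neg (u : Fin n → R) (i0 : Fin n) (w : R) :
    rk u (sing i0 (-w)) = -(rk u (sing i0 w)) := by
  ext i j
  by_cases h : j = i0 <;> simp [rk, sing, h, mul_neg]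

/-- signed swap unit -/
def swu (p q : Fin n) (hpq : p ≠ q) : (Mat n R)ˣ :=
  tunit p q hpq 1 * tunit q p (Ne.symm hpq) (-1) * tunit p q hpq 1

lemma swu_mem (p q : Fin n) (hpq : p ≠ q) : swu p q hpq ∈ (En n R) :=
  mul_mem (mul_mem (tunit_mem _ _ _ _) (tunit_mem _ _ _ _)) (tunit_mem _ _ _ _)

lemma swu_val (p q : Fin n) (hpq : p ≠ q) :
    ((swu p q hpq : (Mat n R)ˣ)).val
      = 1 + rk (sing p 1) (sing q 1) + rk (sing q 1) (sing p (-1))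
      + rk (sing p 1) (sing p (-1)) + rk (sing q 1) (sing q (-1)) := by
  have hv : ((swu p q hpq : (Mat n R)ˣ)).val =
      (1 + rk (sing p 1) (sing q 1)) * (1 + rk (sing q 1) (sing p (-1)))
        * (1 + rk (sing p 1) (sing q 1)) := by
    simp only [swu, Units.val_mul]; rfl
  rw [hv]
  set A : Mat n R := rk (sing p 1) (sing q 1) with hA
  set B : Mat n R := rk (sing q 1) (sing p (-1)) with hB
  set C : Mat n R := rk (sing p 1) (sing p (-1)) with hC
  set D : Mat n R := rk (sing q 1) (sing q (-1)) with hD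
  have hqq : (sing q 1 : Fin n → R) ⬝ᵥ sing q 1 = 1 := by
    rw [sing_dot, sing_apply_self, mul_one]
  have hpneg : (sing p (-1) : Fin n → R) ⬝ᵥ sing p 1 = -1 := by
    rw [sing_dot, sing_apply_self, mul_one]
  have hAB : A * B = C := by
    rw [hA, hB, hC, rk_mul_rk, hqq, rk_fun_one]
  have hAA : A * A = 0 := rk_collapse_zero _ _ _ _ (sing_dot_sing_ne (Ne.symm hpq) 1 1)
  have hBA : B * A = D := by
    rw [hA, hB, hD, rk_mul_rk, hpneg]
    ext i j
    by_cases h1 : i = q <;> by_cases h2 : j = q <;> simp [rk, sing, h1, h2]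
  have hCA : C * A = -A := by
    rw [hA, hC, rk_mul_rk, hpneg]
    ext i j
    by_cases h1 : i = p <;> by_cases h2 : j = q <;> simp [rk, sing, h1, h2]
  noncomm_ring [hAB, hAA, hBA, hCA]

lemma swap_comm_row (p q k : Fin n) (hpq : p ≠ q) (hkp : k ≠ p) (hkq : k ≠ q) (w : R) :
    trv k p w * ((swu p q hpq : (Mat n R)ˣ)).val
      = ((swu p q hpq : (Mat n R)ˣ)).val * trv k q w := by
  rw [swu_val, trv_eq_rk, trv_eq_rk]
  set A : Mat n R := rk (sing p 1) (sing q 1) with hA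
  set B : Mat n R := rk (sing q 1) (sing p (-1)) with hB
  set C : Mat n R := rk (sing p 1) (sing p (-1)) with hC
  set D : Mat n R := rk (sing q 1) (sing q (-1)) with hD
  set T : Mat n R := rk (sing k 1) (sing p w) with hT
  set T' : Mat n R := rk (sing k 1) (sing q w) with hT'
  have hwp : (sing p w : Fin n → R) ⬝ᵥ sing p 1 = w := by
    rw [sing_dot, sing_apply_self, mul_one]
  have hTA : T * A = T' := by
    rw [hT, hA, hT', rk_mul_rk, hwp, rk_absorb, sing_smul_left, mul_one]
  have hTB : T * B = 0 := rk_collapse_zero _ _ _ _ (sing_dot_sing_ne hpq w 1)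
  have hTC : T * C = -T := by
    rw [hT, hC, rk_mul_rk, hwp]
    ext i j
    by_cases h1 : i = k <;> by_cases h2 : j = p <;>
      simp [rk, sing, h1, h2, mul_neg]
  have hTD : T * D = 0 := rk_collapse_zero _ _ _ _ (sing_dot_sing_ne hpq w 1)
  have hAT : A * T' = 0 := rk_collapse_zero _ _ _ _ (sing_dot_sing_ne (Ne.symm hkq) 1 1)
  have hBT : B * T' = 0 := rk_collapse_zero _ _ _ _ (sing_dot_sing_ne (Ne.symm hkp) (-1) 1)
  have hCT : C * T' = 0 := rk_collapse_zero _ _ _ _ (sing_dot_sing_ne (Ne.symm hkp) (-1) 1)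
  have hDT : D * T' = 0 := rk_collapse_zero _ _ _ _ (sing_dot_sing_ne (Ne.symm hkq) (-1) 1)
  noncomm_ring [hTA, hTB, hTC, hTD, hAT, hBT, hCT, hDT]

lemma swap_comm_col (p q l : Fin n) (hpq : p ≠ q) (hlp : l ≠ p) (hlq : l ≠ q) (w : R) :
    trv p l w * ((swu p q hpq : (Mat n R)ˣ)).val
      = ((swu p q hpq : (Mat n R)ˣ)).val * trv q l w := by
  rw [swu_val, trv_eq_rk, trv_eq_rk]
  set A : Mat n R := rk (sing p 1) (sing q 1) with hA
  set B : Mat n R := rk (sing q 1) (sing p (-1)) with hB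
  set C : Mat n R := rk (sing p 1) (sing p (-1)) with hC
  set D : Mat n R := rk (sing q 1) (sing q (-1)) with hD
  set T : Mat n R := rk (sing p 1) (sing l w) with hT
  set T'' : Mat n R := rk (sing q 1) (sing l w) with hT''
  have hTA : T * A = 0 := rk_collapse_zero _ _ _ _ (sing_dot_sing_ne hlp w 1)
  have hTB : T * B = 0 := rk_collapse_zero _ _ _ _ (sing_dot_sing_ne hlq w 1)
  have hTC : T * C = 0 := rk_collapse_zero _ _ _ _ (sing_dot_sing_ne hlp w 1)
  have hTD : T * D = 0 := rk_collapse_zero _ _ _ _ (sing_dot_sing_ne hlq w 1)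
  have hqq : (sing q 1 : Fin n → R) ⬝ᵥ sing q 1 = 1 := by
    rw [sing_dot, sing_apply_self, mul_one]
  have hAT : A * T'' = T := by
    rw [hA, hT'', hT, rk_mul_rk, hqq, rk_fun_one]
  have hBT : B * T'' = 0 := rk_collapse_zero _ _ _ _ (sing_dot_sing_ne hpq (-1) 1)
  have hCT : C * T'' = 0 := rk_collapse_zero _ _ _ _ (sing_dot_sing_ne hpq (-1) 1)
  have hDT : D * T'' = -T'' := by
    rw [hD, hT'', rk_mul_rk]
    have hdq : (sing q (-1) : Fin n → R) ⬝ᵥ sing q 1 = -1 := by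
      rw [sing_dot, sing_apply_self, mul_one]
    rw [hdq]
    ext i j
    by_cases h1 : i = q <;> by_cases h2 : j = l <;>
      simp [rk, sing, h1, h2, mul_neg]
  noncomm_ring [hTA, hTB, hTC, hTD, hAT, hBT, hCT, hDT]

/-- move a transvection by conjugation -/
lemma conj_transfer (π : (Mat n R)ˣ) (T T' : Mat n R) (h : T * π.val = π.val * T') :
    π.inv * T * π.val = T' := by
  rw [mul_assoc, h, ← mul_assoc, Units.inv_val, one_mul]

lemma trv_move {c : ℕ} {σ : (Mat n R)ˣ} {w : R} (hn : 3 ≤ n) (i0 : Fin n)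
    (H : ∀ k' : Fin n, k' ≠ i0 → IsProdConj c σ (trv k' i0 w))
    (k l : Fin n) (hkl : k ≠ l) : IsProdConj c σ (trv k l w) := by
  by_cases hl : l = i0
  · subst hl; exact H k hkl
  · by_cases hk : k = i0
    · -- k = i0, l ≠ i0 : go through an auxiliary index k₀
      subst hk
      have hex : ∃ k₀ : Fin n, k₀ ≠ k ∧ k₀ ≠ l := by
        by_contra hcon
        push_neg at hcon
        have hsub : (Finset.univ : Finset (Fin n)) ⊆ {k, l} := by
          intro x _
          rcases Classical.em (x = k) with h1 | h1
          · simp [h1]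
          · simp [hcon x h1]
        have hcard := Finset.card_le_card hsub
        have h2 : ({k, l} : Finset (Fin n)).card ≤ 2 := Finset.card_insert_le _ _ |>.trans (by simp)
        simp only [Finset.card_univ, Fintype.card_fin] at hcard
        omega
      obtain ⟨k₀, hk₀k, hk₀l⟩ := hex
      have h1 : IsProdConj c σ (trv k₀ k w) := H k₀ hk₀k
      have hlk : l ≠ k := Ne.symm hkl
      -- conjugate by swu k l : (k₀, k) ↦ (k₀, l)
      have step1 : IsProdConj c σ (trv k₀ l w) := by
        have hc := isProdConj_conj h1 (swu k l hkl) (swu_mem k l hkl)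
        rwa [conj_transfer _ _ _ (swap_comm_row k l k₀ hkl hk₀k hk₀l w)] at hc
      -- conjugate by swu k₀ k : (k₀, l) ↦ (k, l)
      have step2 : IsProdConj c σ (trv k l w) := by
        have hc := isProdConj_conj step1 (swu k₀ k hk₀k) (swu_mem k₀ k hk₀k)
        rwa [conj_transfer _ _ _
          (swap_comm_col k₀ k l hk₀k (Ne.symm hk₀l) (Ne.symm hkl) w)] at hc
      exact step2
    · -- k ≠ i0, l ≠ i0
      have h1 : IsProdConj c σ (trv k i0 w) := H k hk
      have hc := isProdConj_conj h1 (swu i0 l (Ne.symm hl)) (swu_mem i0 l (Ne.symm hl))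
      rwa [conj_transfer _ _ _
        (swap_comm_row i0 l k (Ne.symm hl) hk hkl w)] at hc

end S14Aux
open S14Aux in
theorem stmt14 {R : Type*} [Ring R] [Nontrivial R] {n m : ℕ} (hn : 3 ≤ n)
    (hm1 : 1 ≤ m) (hmn : m < n)
    (σ : (Mat n R)ˣ) (τ : (Mat m R)ˣ) (hτ : τ ∈ En m R)
    (h1n : (σ.val * embMat (le_of_lt hmn) τ.val) ⟨0, by omega⟩ ⟨n - 1, by omega⟩ = 0)
    (j : Fin n) (k l : Fin n) (hkl : k ≠ l) (a b : R) :
    (1 ≤ j.val ∧ j.val < n - m →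
      IsProdConj 8 σ (trv k l (a * σ⁻¹.val ⟨0, by omega⟩ j * b))) ∧
    (n - m ≤ j.val →
      IsProdConj (8 * m) σ (trv k l (a * σ⁻¹.val ⟨0, by omega⟩ j * b))) := by
  have h0n : 0 < n := by omega
  have hnm1 : 1 ≤ n - m := by omega
  have hle : m ≤ n := le_of_lt hmn
  set i0 : Fin n := ⟨0, by omega⟩ with hi0
  set iN : Fin n := ⟨n - 1, by omega⟩ with hiN
  set d : Fin n → R := fun i => embMat hle τ.val i iN with hd
  set u : Fin n → R := σ.val.mulVec d with hu
  set r : Fin n → R := fun j' => σ⁻¹.val i0 j' with hrdef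
  -- the inverse relation for the embedded block
  have hEMinv : embMat hle (τ⁻¹).val * embMat hle τ.val = 1 := by
    rw [embMat_mul]
    have hττ : (τ⁻¹).val * (τ.val : Mat m R) = 1 := by
      rw [← Units.val_mul, inv_mul_cancel, Units.val_one]
    rw [hττ, embMat_one]
  -- basic entry facts
  have hd0 : d i0 = 0 := by
    show embMat hle τ.val i0 iN = 0
    rw [embMat_apply_nonblock hle τ.val (by rw [hi0]; show (0:ℕ) < n - m; omega) iN]
    rw [if_neg]
    intro hcon
    rw [hi0, hiN] at hcon
    have := congrArg Fin.val hcon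
    simp only [] at this
    omega
  have hu0 : u i0 = 0 := by
    show (σ.val.mulVec d) i0 = 0
    have hmv : (σ.val.mulVec d) i0 = (σ.val * embMat hle τ.val) i0 iN := by
      rw [Matrix.mul_apply]
      simp only [Matrix.mulVec, dotProduct, hd]
    rw [hmv]
    exact h1n
  have hru : r ⬝ᵥ u = 0 := by
    have h1 : r ⬝ᵥ u = (σ⁻¹.val.mulVec u) i0 := by
      simp only [Matrix.mulVec, dotProduct, hrdef]
    rw [h1, hu, Matrix.mulVec_mulVec]
    have hinv : σ⁻¹.val * σ.val = 1 := by
      rw [← Units.val_mul, inv_mul_cancel, Units.val_one]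
    rw [hinv, Matrix.one_mulVec]
    exact hd0
  -- the row sh with sh ⬝ᵥ u = 1 and sh i0 = 0
  set s0 : Fin n → R := vecMul (fun p => embMat hle (τ⁻¹).val iN p) σ⁻¹.val with hs0
  set sh : Fin n → R := fun q => if q = i0 then 0 else s0 q with hsh
  have hsh0 : sh i0 = 0 := by simp [hsh]
  have hshu : sh ⬝ᵥ u = 1 := by
    have hstep : sh ⬝ᵥ u = s0 ⬝ᵥ u := by
      apply Finset.sum_congr rfl
      intro q _
      by_cases hq : q = i0
      · subst hq; rw [hsh0, hu0, zero_mul, mul_zero]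
      · simp only [hsh, if_neg hq]
    rw [hstep, hu, Matrix.dotProduct_mulVec, hs0, Matrix.vecMul_vecMul]
    have hinv : σ⁻¹.val * σ.val = 1 := by
      rw [← Units.val_mul, inv_mul_cancel, Units.val_one]
    rw [hinv, Matrix.vecMul_one]
    have hdot : (fun p => embMat hle (τ⁻¹).val iN p) ⬝ᵥ d
        = (embMat hle (τ⁻¹).val * embMat hle τ.val) iN iN := by
      rw [Matrix.mul_apply]
      simp only [dotProduct, hd]
    rw [hdot, hEMinv]
    exact Matrix.one_apply_eq iN
  -- the main 8-conjugate statement for scalars a' * (r ⬝ᵥ D) * b'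
  have main8 : ∀ D : Fin n → R, D i0 = 0 → ∀ a' b' : R,
      IsProdConj 8 σ (trv k l (a' * (r ⬝ᵥ D) * b')) := by
    intro D hD0 a' b'
    refine trv_move hn i0 (fun k' hk' => ?_) k l hkl
    exact core_lemma σ i0 k' hk' d D u r sh rfl rfl hd0 hD0 hu0 hru hsh0 hshu a' b'
  have hji0 : 1 ≤ j.val → i0 ≠ j := by
    intro hj1 hcon
    rw [hi0] at hcon
    have := congrArg Fin.val hcon
    simp only [] at this
    omega
  constructor
  · rintro ⟨hj1, hj2⟩
    have h8 := main8 (sing j 1) (sing_apply_ne (hji0 hj1) 1) a b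
    rw [dot_sing, mul_one] at h8
    exact h8
  · intro hj2
    have h8 := main8 (sing j 1) (sing_apply_ne (hji0 (by omega)) 1) a b
    rw [dot_sing, mul_one] at h8
    have hcount : 8 * m = 8 + 2 * (4 * (m - 1)) := by omega
    rw [hcount]
    exact isProdConj_pad_many h8 (4 * (m - 1))
end

section
/- Suppose R is a ring with (n−1)-term Euclidean algorithm, i.e., for every row vector v ∈ R^{n-1} there is τ ∈ E_{n-1}(R) such that vτ has a zero entry. Let σ ∈ GL_n(R), let i ≠ j and k ≠ l be indices, and let a, b, c ∈ R. Then (i) t_{kl}(a σ_{ij} b) is a product of 8(n−1) elements, each an E_n(R)-conjugate of σ or of σ^{-1}; and (ii) t_{kl}(a(c σ_{ii} − σ_{jj} c) b) is a product of 24(n−1) elements, each an E_n(R)-conjugate of σ or of σ^{-1}. -/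
open Matrix

namespace St16

variable {R : Type*} [Ring R] {n : ℕ}

/-- rank one matrix u ⬝ x ⬝ vᵀ -/
def out (u : Fin n → R) (x : R) (v : Fin n → R) : Mat n R :=
  Matrix.of fun h q => u h * x * v q

@[simp] lemma out_apply (u : Fin n → R) (x : R) (v : Fin n → R) (h q : Fin n) :
    out u x v h q = u h * x * v q := rfl

lemma mul_out (M : Mat n R) (u : Fin n → R) (x : R) (v : Fin n → R) :
    M * out u x v = out (M *ᵥ u) x v := by
  ext h q
  simp [Matrix.mul_apply, out, Matrix.mulVec, dotProduct, Finset.sum_mul, mul_assoc]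

lemma out_mul (u : Fin n → R) (x : R) (v : Fin n → R) (M : Mat n R) :
    out u x v * M = out u x (v ᵥ* M) := by
  ext h q
  simp [Matrix.mul_apply, out, Matrix.vecMul, dotProduct, Finset.mul_sum, mul_assoc]

lemma out_mul_out (u : Fin n → R) (x : R) (v u' : Fin n → R) (x' : R) (v' : Fin n → R) :
    out u x v * out u' x' v' = out u (x * (v ⬝ᵥ u') * x') v' := by
  ext h q
  simp [Matrix.mul_apply, out, dotProduct, Finset.mul_sum, Finset.sum_mul, mul_assoc]

lemma out_add_mid (u : Fin n → R) (x y : R) (v : Fin n → R) :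
    out u x v + out u y v = out u (x + y) v := by
  ext h q; simp [out, mul_add, add_mul]

@[simp] lemma out_zero_mid (u : Fin n → R) (v : Fin n → R) : out u (0:R) v = 0 := by
  ext h q; simp [out]

lemma out_neg_mid (u : Fin n → R) (x : R) (v : Fin n → R) :
    out u (-x) v = - out u x v := by
  ext h q; simp [out, neg_mul, mul_neg]

lemma sum_out {K : Type*} (s : Finset K) (u : Fin n → R) (θ : K → R) (v : Fin n → R) :
    ∑ h ∈ s, out u (θ h) v = out u (∑ h ∈ s, θ h) v := by
  ext a q
  simp [out, Finset.sum_mul, Finset.mul_sum, Finset.sum_apply, Matrix.sum_apply]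

lemma out_smul_right (u : Fin n → R) (x c : R) (v : Fin n → R) :
    out u x (c • v) = out u (x * c) v := by
  ext h q; simp [out, mul_assoc, Pi.smul_apply, smul_eq_mul]

lemma out_single_smul_left (c : R) (k : Fin n) (x : R) (v : Fin n → R) :
    out (c • (Pi.single k (1:R) : Fin n → R)) x v
      = out (Pi.single k (1:R)) (c * x) v := by
  ext h q
  by_cases hk : h = k <;>
    simp [out, hk, Pi.single_apply, mul_assoc]

lemma out_mulVec (u : Fin n → R) (x : R) (v w : Fin n → R) :
    out u x v *ᵥ w = fun h => u h * (x * (v ⬝ᵥ w)) := by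
  funext h
  simp [out, Matrix.mulVec, dotProduct, Finset.mul_sum, mul_assoc]

@[simp] lemma dot_single_right (v : Fin n → R) (k : Fin n) :
    v ⬝ᵥ Pi.single k (1:R) = v k := by simp

@[simp] lemma dot_single_left (v : Fin n → R) (k : Fin n) :
    Pi.single k (1:R) ⬝ᵥ v = v k := by simp

lemma mulVec_e (M : Mat n R) (j : Fin n) : (M *ᵥ Pi.single j (1:R)) = fun a => M a j := by
  funext a; simp [Matrix.mulVec]

lemma vecMul_e (M : Mat n R) (i : Fin n) : (Pi.single i (1:R) ᵥ* M) = fun b => M i b := by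
  funext b; simp [Matrix.vecMul]

/-- the unit 1 + w when w² = 0 -/
def oneAddUnit (w : Mat n R) (hw : w * w = 0) : (Mat n R)ˣ where
  val := 1 + w
  inv := 1 - w
  val_inv := by rw [mul_sub, mul_one, add_mul, one_mul, hw]; abel
  inv_val := by rw [sub_mul, one_mul, mul_add, mul_one, hw]; abel

@[simp] lemma oneAddUnit_val (w : Mat n R) (hw) : (oneAddUnit w hw).val = 1 + w := rfl
@[simp] lemma oneAddUnit_inv_val (w : Mat n R) (hw) : ((oneAddUnit w hw)⁻¹).val = 1 - w := rfl

lemma out_sq_zero (u : Fin n → R) (x : R) (v : Fin n → R) (h : v ⬝ᵥ u = 0) :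
    out u x v * out u x v = 0 := by
  rw [out_mul_out, h, mul_zero, zero_mul, out_zero_mid]

/-- transvection as 1 + out -/
lemma trv_eq (i j : Fin n) (x : R) :
    trv i j x = 1 + out (Pi.single i (1:R)) x (Pi.single j (1:R)) := by
  ext a b
  simp only [trv, Matrix.single, Matrix.add_apply, Matrix.of_apply, out_apply,
    Pi.single_apply]
  by_cases hai : i = a <;> by_cases hbj : j = b <;>
    simp [hai, hbj, eq_comm]

def trvU (i j : Fin n) (hij : i ≠ j) (x : R) : (Mat n R)ˣ :=
  oneAddUnit (out (Pi.single i (1:R)) x (Pi.single j (1:R)))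
    (out_sq_zero _ _ _ (by simp [Pi.single_apply, hij.symm]))

lemma trvU_val (i j : Fin n) (hij : i ≠ j) (x : R) : (trvU i j hij x).val = trv i j x :=
  (trv_eq i j x).symm

lemma trvU_inv_val (i j : Fin n) (hij : i ≠ j) (x : R) :
    ((trvU i j hij x)⁻¹).val = trv i j (-x) := by
  show (1 : Mat n R) - _ = _
  rw [trv_eq, out_neg_mid]; abel

lemma trvU_mem (i j : Fin n) (hij : i ≠ j) (x : R) : trvU i j hij x ∈ En n R :=
  Subgroup.subset_closure ⟨i, j, hij, x, trvU_val i j hij x⟩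

lemma trv_mul_trv (k l : Fin n) (hkl : k ≠ l) (x y : R) :
    trv k l x * trv k l y = trv k l (x + y) := by
  rw [trv_eq, trv_eq, trv_eq, add_mul, one_mul, mul_add, mul_one, out_mul_out]
  have : (Pi.single l (1:R)) ⬝ᵥ (Pi.single k (1:R)) = 0 := by
    simp [Pi.single_apply, hkl.symm]
  rw [this, mul_zero, zero_mul, out_zero_mid, ← out_add_mid]
  abel

end St16

namespace St16

variable {R : Type*} [Ring R] {n : ℕ}

lemma prodOneAdd : ∀ {K : ℕ} (f : Fin K → Mat n R), (∀ a b, f a * f b = 0) →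
    (List.ofFn (fun a => 1 + f a)).prod = 1 + ∑ a, f a := by
  intro K
  induction K with
  | zero => intro f _; simp
  | succ K ih =>
      intro f hf
      rw [List.ofFn_succ, List.prod_cons]
      have := ih (fun a => f a.succ) (fun a b => hf _ _)
      rw [this]
      have h0 : f 0 * (∑ a : Fin K, f a.succ) = 0 := by
        rw [Finset.mul_sum]
        exact Finset.sum_eq_zero fun a _ => hf _ _
      have hx : ((1 : Mat n R) + f 0) * (1 + ∑ a : Fin K, f a.succ)
          = 1 + f 0 + (∑ a : Fin K, f a.succ) + f 0 * (∑ a : Fin K, f a.succ) := by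
        noncomm_ring
      rw [hx, h0, Fin.sum_univ_succ]
      abel

lemma comm_collapse (w z : Mat n R) (hw : w * w = 0) (hz : z * z = 0) (hzw : z * w = 0) :
    (1 - w) * (1 + z) * (1 + w) * (1 - z) = 1 - w * z := by
  have h1 : (1 - w) * (1 + z) = 1 + z - w - w * z := by noncomm_ring
  have h2 : (1 + z - w - w * z) * (1 + w)
      = 1 + z - w * z + (w + z * w - w - w * w - w * z * w) := by noncomm_ring
  have h3 : w * z * w = 0 := by rw [mul_assoc, hzw, mul_zero]
  have h4 : (1 + z - w * z) * (1 - z) = 1 - w * z - (z * z - z + z - w * z * z) := by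
    noncomm_ring
  have h5 : w * z * z = 0 := by rw [mul_assoc, hz, mul_zero]
  rw [h1, h2, hzw, hw, h3]
  have : (1 : Mat n R) + z - w * z + (w + 0 - w - 0 - 0) = 1 + z - w * z := by abel
  rw [this, h4, hz, h5]
  abel

lemma conj_calc (Ai A m : Mat n R) (hAiA : Ai * A = 1) (hAim : Ai * m = m)
    (hmAm : m * A * m = 0) :
    Ai * (1 + m) * A * (1 - m) = 1 + m * A - m := by
  have h1 : Ai * (1 + m) = Ai + m := by rw [mul_add, mul_one, hAim]
  have h2 : (Ai + m) * A = 1 + m * A := by rw [add_mul, hAiA]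
  rw [h1, h2]
  have h3 : (1 + m * A) * (1 - m) = 1 - m + m * A - m * A * m := by noncomm_ring
  rw [h3, hmAm]
  abel

/-- if U.val = 1 + w with w² = 0 then U⁻¹.val = 1 - w -/
lemma inv_val_of_sq (U : (Mat n R)ˣ) (w : Mat n R) (hU : U.val = 1 + w) (hw : w * w = 0) :
    (U⁻¹).val = 1 - w := by
  have h1 : U.val * (1 - w) = 1 := by
    rw [hU, add_mul, one_mul, mul_sub, mul_one, hw]; abel
  calc (U⁻¹).val = (U⁻¹).val * (U.val * (1 - w)) := by rw [h1, mul_one]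
    _ = ((U⁻¹).val * U.val) * (1 - w) := by rw [mul_assoc]
    _ = 1 - w := by rw [U.inv_mul, one_mul]

/-- `u` is an E_n-conjugate of σ or σ⁻¹. -/
def ConjFactor (σ : (Mat n R)ˣ) (u : (Mat n R)ˣ) : Prop :=
  ∃ ξ ∈ En n R, u = ξ⁻¹ * σ * ξ ∨ u = ξ⁻¹ * σ⁻¹ * ξ

lemma ConjFactor.inv {σ u : (Mat n R)ˣ} (h : ConjFactor σ u) : ConjFactor σ u⁻¹ := by
  obtain ⟨ξ, hξ, h | h⟩ := h
  · exact ⟨ξ, hξ, Or.inr (by rw [h]; group)⟩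
  · exact ⟨ξ, hξ, Or.inl (by rw [h]; group)⟩

lemma ConjFactor.conj {σ u : (Mat n R)ˣ} (g : (Mat n R)ˣ) (hg : g ∈ En n R)
    (h : ConjFactor σ u) : ConjFactor σ (g⁻¹ * u * g) := by
  obtain ⟨ξ, hξ, h | h⟩ := h
  · exact ⟨ξ * g, mul_mem hξ hg, Or.inl (by rw [h]; group)⟩
  · exact ⟨ξ * g, mul_mem hξ hg, Or.inr (by rw [h]; group)⟩

lemma ConjFactor.of_conj {σ σ' u : (Mat n R)ˣ} (ζ : (Mat n R)ˣ) (hζ : ζ ∈ En n R)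
    (hσ' : σ' = ζ⁻¹ * σ * ζ) (h : ConjFactor σ' u) : ConjFactor σ u := by
  obtain ⟨ξ, hξ, h | h⟩ := h
  · exact ⟨ζ * ξ, mul_mem hζ hξ, Or.inl (by rw [h, hσ']; group)⟩
  · exact ⟨ζ * ξ, mul_mem hζ hξ, Or.inr (by rw [h, hσ']; group)⟩

lemma prod_map_conj {G : Type*} [Group G] (g : G) :
    ∀ (L : List G), (L.map fun u => g⁻¹ * u * g).prod = g⁻¹ * L.prod * g := by
  intro L
  induction L with
  | nil => simp
  | cons a L ih => simp only [List.map_cons, List.prod_cons, ih]; group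

lemma prod_inv_rev {G : Type*} [Group G] (L : List G) :
    ((L.map fun u => u⁻¹).reverse).prod = L.prod⁻¹ :=
  (List.prod_inv_reverse L).symm

end St16

namespace St16

variable {R : Type*} [Ring R] {n : ℕ}

/-- a unipotent column 1 + u·eₚᵀ with uₚ = 0 lies in Eₙ. -/
lemma colU_mem : ∀ (S : Finset (Fin n)) (p : Fin n), p ∉ S → ∀ u : Fin n → R,
    (∀ q, q ∉ S → u q = 0) → ∀ U : (Mat n R)ˣ,
    U.val = 1 + out u 1 (Pi.single p 1) → U ∈ En n R := by
  classical
  intro S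
  induction S using Finset.induction_on with
  | empty =>
      intro p _ u hu U hU
      have hu0 : u = 0 := funext fun q => hu q (by simp)
      have : U = 1 := by
        apply Units.ext
        rw [hU, hu0]
        have : out (0 : Fin n → R) 1 (Pi.single p 1) = 0 := by ext a b; simp [out]
        rw [this, add_zero]; rfl
      rw [this]; exact one_mem _
  | @insert a S' haS' ih =>
      intro p hp u hu U hU
      have hap : a ≠ p := fun h => hp (h ▸ Finset.mem_insert_self a S')
      have hpS' : p ∉ S' := fun h => hp (Finset.mem_insert_of_mem h)
      set u' := Function.update u a 0 with hu'
      have hu'0 : ∀ q, q ∉ S' → u' q = 0 := by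
        intro q hq
        by_cases hqa : q = a
        · subst hqa; simp [hu']
        · rw [hu', Function.update_of_ne hqa]
          exact hu q (by simp [hqa, hq])
      have hu'p : u' p = 0 := hu'0 p hpS'
      have hdot : (Pi.single p (1:R)) ⬝ᵥ u' = 0 := by simp [hu'p]
      set U₂ : (Mat n R)ˣ := oneAddUnit (out u' 1 (Pi.single p 1)) (out_sq_zero _ _ _ hdot)
        with hU₂
      have hsplit : U = trvU a p hap (u a) * U₂ := by
        apply Units.ext
        rw [Units.val_mul, hU]
        have h2 : (trvU a p hap (u a)).val
            = 1 + out (Pi.single a 1) (u a) (Pi.single p 1) := rfl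
        have h3 : U₂.val = 1 + out u' 1 (Pi.single p 1) := rfl
        rw [h2, h3, mul_add, mul_one, add_mul, one_mul, out_mul_out, hdot,
          mul_zero, zero_mul, out_zero_mid, add_zero]
        have : out (Pi.single a 1) (u a) (Pi.single p 1) + out u' 1 (Pi.single p 1)
            = out u 1 (Pi.single p 1) := by
          ext h q
          by_cases hha : h = a
          · subst hha; simp [out, Pi.single_apply, hu']
          · simp [out, Pi.single_apply, hha, hu', Function.update_of_ne hha]
        rw [add_assoc, this]
      rw [hsplit]
      exact mul_mem (trvU_mem a p hap (u a)) (ih p hpS' u' hu'0 U₂ rfl)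

lemma colU_mem' (p : Fin n) (u : Fin n → R) (hup : u p = 0) (U : (Mat n R)ˣ)
    (hU : U.val = 1 + out u 1 (Pi.single p 1)) : U ∈ En n R := by
  classical
  exact colU_mem (Finset.univ.erase p) p (Finset.notMem_erase p _) u
    (fun q hq => by
      have : q = p := by
        by_contra hqp
        exact hq (Finset.mem_erase.2 ⟨hqp, Finset.mem_univ q⟩)
      rw [this]; exact hup) U hU

end St16

namespace St16

variable {R : Type*} [Ring R] {N : ℕ}

/-- embedding of N×N matrices into (N+1)×(N+1) at the complement of index i -/
def embM (i : Fin (N+1)) (A : Mat N R) : Mat (N+1) R :=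
  Matrix.of fun a b =>
    match finSuccEquiv' i a, finSuccEquiv' i b with
    | some a', some b' => A a' b'
    | none, none => 1
    | _, _ => 0

@[simp] lemma embM_sA_sA (i : Fin (N+1)) (A : Mat N R) (a b : Fin N) :
    embM i A (i.succAbove a) (i.succAbove b) = A a b := by
  simp [embM, finSuccEquiv'_succAbove]

@[simp] lemma embM_i_sA (i : Fin (N+1)) (A : Mat N R) (b : Fin N) :
    embM i A i (i.succAbove b) = 0 := by
  simp [embM, finSuccEquiv'_at, finSuccEquiv'_succAbove]

@[simp] lemma embM_sA_i (i : Fin (N+1)) (A : Mat N R) (a : Fin N) :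
    embM i A (i.succAbove a) i = 0 := by
  simp [embM, finSuccEquiv'_at, finSuccEquiv'_succAbove]

@[simp] lemma embM_i_i (i : Fin (N+1)) (A : Mat N R) : embM i A i i = 1 := by
  simp [embM, finSuccEquiv'_at]

lemma embM_row_i (i : Fin (N+1)) (A : Mat N R) (b : Fin (N+1)) :
    embM i A i b = if b = i then 1 else 0 := by
  rcases eq_or_ne b i with rfl | hb
  · simp
  · obtain ⟨b', rfl⟩ := Fin.exists_succAbove_eq hb
    simp [Fin.succAbove_ne i b']

lemma embM_col_i (i : Fin (N+1)) (A : Mat N R) (a : Fin (N+1)) :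
    embM i A a i = if a = i then 1 else 0 := by
  rcases eq_or_ne a i with rfl | ha
  · simp
  · obtain ⟨a', rfl⟩ := Fin.exists_succAbove_eq ha
    simp [Fin.succAbove_ne i a']

lemma embM_one (i : Fin (N+1)) : embM i (1 : Mat N R) = 1 := by
  ext a b
  rcases eq_or_ne a i with ha | ha
  · rw [ha, embM_row_i]
    rcases eq_or_ne b i with hb | hb
    · rw [hb]; simp [Matrix.one_apply]
    · simp [hb, Matrix.one_apply, Ne.symm hb]
  · obtain ⟨a', rfl⟩ := Fin.exists_succAbove_eq ha
    rcases eq_or_ne b i with hb | hb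
    · rw [hb]
      simp [Matrix.one_apply, Fin.succAbove_ne i a']
    · obtain ⟨b', rfl⟩ := Fin.exists_succAbove_eq hb
      simp [Matrix.one_apply, (Fin.succAbove_right_injective (p := i)).eq_iff]

lemma embM_mul (i : Fin (N+1)) (A B : Mat N R) :
    embM i A * embM i B = embM i (A * B) := by
  ext a b
  rw [Matrix.mul_apply, Fin.sum_univ_succAbove _ i]
  rcases eq_or_ne a i with ha | ha
  · rcases eq_or_ne b i with hb | hb
    · rw [ha, hb]; simp
    · obtain ⟨b', rfl⟩ := Fin.exists_succAbove_eq hb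
      rw [ha]; simp
  · obtain ⟨a', rfl⟩ := Fin.exists_succAbove_eq ha
    rcases eq_or_ne b i with hb | hb
    · rw [hb]; simp
    · obtain ⟨b', rfl⟩ := Fin.exists_succAbove_eq hb
      simp [Matrix.mul_apply]

def embU (i : Fin (N+1)) (τ : (Mat N R)ˣ) : (Mat (N+1) R)ˣ where
  val := embM i τ.val
  inv := embM i (τ⁻¹).val
  val_inv := by rw [embM_mul, Units.mul_inv, embM_one]
  inv_val := by rw [embM_mul, Units.inv_mul, embM_one]

@[simp] lemma embU_val (i : Fin (N+1)) (τ : (Mat N R)ˣ) :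
    (embU i τ).val = embM i τ.val := rfl

@[simp] lemma embU_inv_val (i : Fin (N+1)) (τ : (Mat N R)ˣ) :
    ((embU i τ)⁻¹).val = embM i (τ⁻¹).val := rfl

lemma embM_trv (i : Fin (N+1)) (a b : Fin N) (x : R) :
    embM i (trv a b x) = trv (i.succAbove a) (i.succAbove b) x := by
  have hane : i.succAbove a ≠ i := Fin.succAbove_ne i a
  have hbne : i.succAbove b ≠ i := Fin.succAbove_ne i b
  ext c d
  rcases eq_or_ne c i with hc | hc
  · rw [hc, embM_row_i]
    rcases eq_or_ne d i with hd | hd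
    · rw [hd]
      simp [trv, Matrix.single, Matrix.one_apply, hane]
    · obtain ⟨d', rfl⟩ := Fin.exists_succAbove_eq hd
      simp [trv, Matrix.single, Matrix.one_apply, hd,
        Ne.symm (Fin.succAbove_ne i d'), hane]
  · obtain ⟨c', rfl⟩ := Fin.exists_succAbove_eq hc
    rcases eq_or_ne d i with hd | hd
    · rw [hd]
      simp [trv, Matrix.single, Matrix.one_apply, hc, hbne]
    · obtain ⟨d', rfl⟩ := Fin.exists_succAbove_eq hd
      simp [trv, Matrix.single, Matrix.one_apply,
        (Fin.succAbove_right_injective (p := i)).eq_iff]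

lemma embU_mem (i : Fin (N+1)) {τ : (Mat N R)ˣ} (hτ : τ ∈ En N R) :
    embU i τ ∈ En (N+1) R := by
  have key : ∀ (σ₁ σ₂ : (Mat N R)ˣ), embU i (σ₁ * σ₂) = embU i σ₁ * embU i σ₂ := by
    intro σ₁ σ₂
    apply Units.ext
    rw [Units.val_mul, embU_val, embU_val, embU_val, Units.val_mul, embM_mul]
  have keyinv : ∀ (σ₁ : (Mat N R)ˣ), embU i σ₁⁻¹ = (embU i σ₁)⁻¹ :=
    fun σ₁ => Units.ext rfl
  refine Subgroup.closure_induction ?_ ?_ ?_ ?_ hτ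
  · rintro x ⟨c, d, hcd, y, hx⟩
    have : embU i x = trvU (i.succAbove c) (i.succAbove d)
        (fun h => hcd (Fin.succAbove_right_injective h)) y := by
      apply Units.ext
      rw [embU_val, hx, embM_trv, trvU_val]
    rw [this]
    exact trvU_mem _ _ _ _
  · have : embU i (1 : (Mat N R)ˣ) = 1 := Units.ext (by rw [embU_val, Units.val_one, embM_one]; rfl)
    rw [this]; exact one_mem _
  · intro x y _ _ hx hy
    rw [key]; exact mul_mem hx hy
  · intro x _ hx
    rw [keyinv]; exact inv_mem hx

end St16

namespace St16

variable {R : Type*} [Ring R] {N : ℕ}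

lemma vecMul_embM (v : Fin (N+1) → R) (i : Fin (N+1)) (τ : Mat N R) (p₀ : Fin N) :
    (v ᵥ* embM i τ) (i.succAbove p₀) = ∑ q, v (i.succAbove q) * τ q p₀ := by
  show ∑ a, v a * embM i τ a (i.succAbove p₀) = _
  rw [Fin.sum_univ_succAbove (fun a => v a * embM i τ a (i.succAbove p₀)) i]
  simp

lemma vecMul_embM_self (v : Fin (N+1) → R) (i : Fin (N+1)) (τ : Mat N R) :
    (v ᵥ* embM i τ) i = v i := by
  show ∑ a, v a * embM i τ a i = _
  rw [Fin.sum_univ_succAbove (fun a => v a * embM i τ a i) i]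
  simp

/-- Two-fold Euclidean reduction: ε ∈ E_{N+1} with two zeros in v·ε
  and a trivial (i, s) entry. -/
lemma reduce2
    (heucl : ∀ v : Fin N → R, ∃ τ ∈ En N R, ∃ p : Fin N, ∑ q, v q * τ.val q p = 0)
    (v : Fin (N+1) → R) (i : Fin (N+1)) :
    ∃ ε ∈ En (N+1) R, ∃ s p : Fin (N+1), s ≠ i ∧ p ≠ s ∧ ε.val i s = 0 ∧
      (v ᵥ* ε.val) s = 0 ∧ (v ᵥ* ε.val) p = 0 := by
  obtain ⟨τ₁, hτ₁, p₀, hp₀⟩ := heucl (fun q => v (i.succAbove q))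
  set ε₁ : (Mat (N+1) R)ˣ := embU i τ₁ with hε₁
  set s := i.succAbove p₀ with hs
  set v₁ := v ᵥ* ε₁.val with hv₁
  have hv₁s : v₁ s = 0 := by
    rw [hv₁, embU_val, hs, vecMul_embM]
    exact hp₀
  obtain ⟨τ₂, hτ₂, p₁, hp₁⟩ := heucl (fun q => v₁ (s.succAbove q))
  set ε₂ : (Mat (N+1) R)ˣ := embU s τ₂ with hε₂
  set p := s.succAbove p₁ with hp
  refine ⟨ε₁ * ε₂, mul_mem (embU_mem i hτ₁) (embU_mem s hτ₂), s, p,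
    Fin.succAbove_ne i p₀, Fin.succAbove_ne s p₁, ?_, ?_, ?_⟩
  · rw [Units.val_mul, Matrix.mul_apply]
    have hrow : ∀ t, ε₁.val i t = if t = i then 1 else 0 := fun t => embM_row_i i τ₁.val t
    have : ∀ t ∈ Finset.univ, ε₁.val i t * ε₂.val t s
        = if t = i then ε₂.val t s else 0 := by
      intro t _
      rw [hrow t]
      by_cases ht : t = i <;> simp [ht]
    rw [Finset.sum_congr rfl this, Finset.sum_ite_eq' Finset.univ i (fun t => ε₂.val t s)]
    have his : i ≠ s := fun h => (Fin.succAbove_ne i p₀) h.symm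
    have h0 : ε₂.val i s = 0 := by
      rw [hε₂, embU_val, embM_col_i, if_neg his]
    simp [h0]
  · rw [Units.val_mul, ← Matrix.vecMul_vecMul, ← hv₁]
    rw [hε₂, embU_val, vecMul_embM_self]
    exact hv₁s
  · rw [Units.val_mul, ← Matrix.vecMul_vecMul, ← hv₁]
    rw [hε₂, embU_val, hp, vecMul_embM]
    exact hp₁

end St16

namespace St16

variable {R : Type*} [Ring R] {n : ℕ}

lemma trv_mulVec (i j : Fin n) (x : R) (u : Fin n → R) :
    trv i j x *ᵥ u = u + Pi.single i (x * u j) := by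
  funext a
  rw [trv_eq, Matrix.add_mulVec, Matrix.one_mulVec, out_mulVec]
  simp [Pi.single_apply, dotProduct, mul_assoc]

lemma vecMul_out (u w : Fin n → R) (x : R) (v : Fin n → R) :
    u ᵥ* out w x v = fun q => (u ⬝ᵥ w) * (x * v q) := by
  funext q
  simp [out, Matrix.vecMul, dotProduct, Finset.sum_mul, mul_assoc]

lemma vecMul_trv (u : Fin n → R) (i j : Fin n) (x : R) :
    u ᵥ* trv i j x = u + Pi.single j (u i * x) := by
  funext a
  rw [trv_eq, Matrix.vecMul_add, Matrix.vecMul_one, vecMul_out]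
  simp [Pi.single_apply, mul_assoc]

end St16

namespace St16

variable {R : Type*} [Ring R] {n : ℕ}

/-- `MovePair s p k l`: some ξ ∈ Eₙ moves (eₛ, eₚ) to (±e_k, ±e_l) by conjugation. -/
def MovePair (R : Type*) [Ring R] {n : ℕ} (s p k l : Fin n) : Prop :=
  ∃ ξ ∈ En n R, ∃ η₁ η₂ : R, (η₁ = 1 ∨ η₁ = -1) ∧ (η₂ = 1 ∨ η₂ = -1) ∧
    ((ξ⁻¹).val *ᵥ Pi.single s 1 = η₁ • (Pi.single k 1 : Fin n → R)) ∧
    (Pi.single p 1 ᵥ* ξ.val = η₂ • (Pi.single l 1 : Fin n → R))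

lemma MovePair.refl (s p : Fin n) : MovePair R s p s p := by
  refine ⟨1, one_mem _, 1, 1, Or.inl rfl, Or.inl rfl, ?_, ?_⟩
  · rw [inv_one, Units.val_one, Matrix.one_mulVec, one_smul]
  · rw [Units.val_one, Matrix.vecMul_one, one_smul]

lemma smul_mulVec_pm (M : Mat n R) (η : R) (hη : η = 1 ∨ η = -1) (v : Fin n → R) :
    M *ᵥ (η • v) = η • (M *ᵥ v) := by
  rcases hη with rfl | rfl
  · simp
  · funext a
    simp [Matrix.mulVec, dotProduct, Finset.mul_sum]

lemma smul_vecMul_pm (η : R) (hη : η = 1 ∨ η = -1) (v : Fin n → R) (M : Mat n R) :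
    (η • v) ᵥ* M = η • (v ᵥ* M) := by
  rcases hη with rfl | rfl
  · simp
  · funext a
    simp [Matrix.vecMul, dotProduct]

lemma MovePair.trans {s p k l k' l' : Fin n} (h1 : MovePair R s p k l)
    (h2 : MovePair R k l k' l') : MovePair R s p k' l' := by
  obtain ⟨ξ₁, hξ₁, η₁, η₂, hη₁, hη₂, hm₁, hm₂⟩ := h1
  obtain ⟨ξ₂, hξ₂, η₁', η₂', hη₁', hη₂', hm₁', hm₂'⟩ := h2
  have hsgn : ∀ (c d : R), (c = 1 ∨ c = -1) → (d = 1 ∨ d = -1) →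
      (c * d = 1 ∨ c * d = -1) := by
    rintro c d (rfl | rfl) (rfl | rfl) <;> simp
  refine ⟨ξ₁ * ξ₂, mul_mem hξ₁ hξ₂, η₁ * η₁', η₂ * η₂',
    hsgn _ _ hη₁ hη₁', hsgn _ _ hη₂ hη₂', ?_, ?_⟩
  · have h3 : ((ξ₁ * ξ₂)⁻¹).val = (ξ₂⁻¹).val * (ξ₁⁻¹).val := by
      rw [_root_.mul_inv_rev, Units.val_mul]
    rw [h3, ← Matrix.mulVec_mulVec, hm₁, smul_mulVec_pm _ _ hη₁, hm₁']
    rcases hη₁ with rfl | rfl <;> rcases hη₁' with rfl | rfl <;>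
      simp [smul_smul]
  · rw [Units.val_mul, ← Matrix.vecMul_vecMul, hm₂, smul_vecMul_pm _ hη₂, hm₂']
    rcases hη₂ with rfl | rfl <;> rcases hη₂' with rfl | rfl <;>
      simp [smul_smul]

lemma MovePair.swap (q r : Fin n) (s p : Fin n) :
    MovePair R s p (Equiv.swap q r s) (Equiv.swap q r p) := by
  rcases eq_or_ne q r with rfl | hqr
  · simpa using MovePair.refl (R := R) s p
  set W : (Mat n R)ˣ := trvU q r hqr 1 * trvU r q hqr.symm (-1) * trvU q r hqr 1 with hW
  have hWmem : W ∈ En n R :=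
    mul_mem (mul_mem (trvU_mem _ _ _ _) (trvU_mem _ _ _ _)) (trvU_mem _ _ _ _)
  have hmulVec : ∀ c : Fin n, (W⁻¹).val *ᵥ Pi.single c 1
      = (if c = r then (-1 : R) else 1) • (Pi.single (Equiv.swap q r c) 1 : Fin n → R) := by
    intro c
    have hval : (W⁻¹).val = trv q r (-1) * (trv r q 1 * trv q r (-1)) := by
      rw [hW, _root_.mul_inv_rev, _root_.mul_inv_rev, Units.val_mul, Units.val_mul,
        trvU_inv_val, trvU_inv_val, neg_neg]
    rw [hval, ← Matrix.mulVec_mulVec, ← Matrix.mulVec_mulVec]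
    simp only [trv_mulVec]
    by_cases hcq : c = q
    · rw [hcq, Equiv.swap_apply_left, if_neg hqr]
      funext t
      by_cases htq : t = q <;> by_cases htr : t = r <;>
        simp [Pi.single_apply, htq, htr, hqr, hqr.symm, Ne.symm hqr]
    · by_cases hcr : c = r
      · rw [hcr, Equiv.swap_apply_right, if_pos rfl]
        funext t
        by_cases htq : t = q <;> by_cases htr : t = r <;>
          simp [Pi.single_apply, htq, htr, hqr, hqr.symm, Ne.symm hqr]
      · rw [Equiv.swap_apply_of_ne_of_ne hcq hcr, if_neg hcr]
        funext t
        by_cases htq : t = q <;> by_cases htr : t = r <;>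
          simp [Pi.single_apply, htq, htr, hqr, hqr.symm, Ne.symm hqr,
            hcq, hcr, Ne.symm hcq, Ne.symm hcr]
  have hvecMul : ∀ c : Fin n, Pi.single c 1 ᵥ* W.val
      = (if c = r then (-1 : R) else 1) • (Pi.single (Equiv.swap q r c) 1 : Fin n → R) := by
    intro c
    have hval : W.val = trv q r 1 * trv r q (-1) * trv q r 1 := by
      rw [hW, Units.val_mul, Units.val_mul, trvU_val, trvU_val]
    rw [hval, ← Matrix.vecMul_vecMul, ← Matrix.vecMul_vecMul]
    simp only [vecMul_trv]
    by_cases hcq : c = q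
    · rw [hcq, Equiv.swap_apply_left, if_neg hqr]
      funext t
      by_cases htq : t = q <;> by_cases htr : t = r <;>
        simp [Pi.single_apply, htq, htr, hqr, hqr.symm, Ne.symm hqr]
    · by_cases hcr : c = r
      · rw [hcr, Equiv.swap_apply_right, if_pos rfl]
        funext t
        by_cases htq : t = q <;> by_cases htr : t = r <;>
          simp [Pi.single_apply, htq, htr, hqr, hqr.symm, Ne.symm hqr]
      · rw [Equiv.swap_apply_of_ne_of_ne hcq hcr, if_neg hcr]
        funext t
        by_cases htq : t = q <;> by_cases htr : t = r <;>
          simp [Pi.single_apply, htq, htr, hqr, hqr.symm, Ne.symm hqr,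
            hcq, hcr, Ne.symm hcq, Ne.symm hcr]
  refine ⟨W, hWmem, if s = r then (-1:R) else 1, if p = r then (-1:R) else 1,
    ?_, ?_, hmulVec s, hvecMul p⟩
  · by_cases hs : s = r <;> simp [hs]
  · by_cases hp : p = r <;> simp [hp]

/-- any (s,p) with s ≠ p moves to any (k,l) with k ≠ l -/
lemma movePair_exists {s p k l : Fin n} (hsp : s ≠ p) (hkl : k ≠ l) :
    MovePair R s p k l := by
  have h1 : MovePair R s p k (Equiv.swap s k p) := by
    have := MovePair.swap (R := R) s k s p
    rwa [Equiv.swap_apply_left] at this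
  set p₂ := Equiv.swap s k p with hp₂
  have hkp₂ : k ≠ p₂ := by
    intro h
    have heq : Equiv.swap s k s = Equiv.swap s k p := by
      rw [Equiv.swap_apply_left]; exact h
    exact hsp ((Equiv.swap s k).injective heq)
  have h2 : MovePair R k p₂ k l := by
    have := MovePair.swap (R := R) p₂ l k p₂
    rwa [Equiv.swap_apply_of_ne_of_ne hkp₂ hkl, Equiv.swap_apply_left] at this
  exact h1.trans h2

end St16

namespace St16

variable {R : Type*} [Ring R] {n : ℕ}

lemma conj_one_addsub (g : (Mat n R)ˣ) (P Z G : Mat n R) :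
    (g⁻¹).val * (1 - P + Z - G) * g.val
      = 1 - (g⁻¹).val * P * g.val + (g⁻¹).val * Z * g.val - (g⁻¹).val * G * g.val := by
  have h : (g⁻¹).val * g.val = 1 := by
    rw [← Units.val_mul, inv_mul_cancel, Units.val_one]
  calc (g⁻¹).val * (1 - P + Z - G) * g.val
      = (g⁻¹).val * g.val - (g⁻¹).val * P * g.val + (g⁻¹).val * Z * g.val
        - (g⁻¹).val * G * g.val := by noncomm_ring
    _ = _ := by rw [h]

lemma conj_one_addsub2 (g : (Mat n R)ˣ) (P Z G : Mat n R) :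
    (g⁻¹).val * (1 + P - Z - G) * g.val
      = 1 + (g⁻¹).val * P * g.val - (g⁻¹).val * Z * g.val - (g⁻¹).val * G * g.val := by
  have h : (g⁻¹).val * g.val = 1 := by
    rw [← Units.val_mul, inv_mul_cancel, Units.val_one]
  calc (g⁻¹).val * (1 + P - Z - G) * g.val
      = (g⁻¹).val * g.val + (g⁻¹).val * P * g.val - (g⁻¹).val * Z * g.val
        - (g⁻¹).val * G * g.val := by noncomm_ring
    _ = _ := by rw [h]

lemma conj_out (g : (Mat n R)ˣ) (u : Fin n → R) (x : R) (v : Fin n → R) :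
    (g⁻¹).val * out u x v * g.val = out ((g⁻¹).val *ᵥ u) x (v ᵥ* g.val) := by
  rw [mul_out, out_mul]

/-- value of Γ = t σ t⁻¹ σ⁻¹ and of Γ⁻¹. -/
lemma gamma_val (σ tU : (Mat n R)ˣ) (ej ei : Fin n → R) (b' : R)
    (ht : tU.val = 1 + out ej b' ei) (hti : (tU⁻¹).val = 1 - out ej b' ei) :
    (tU * σ * tU⁻¹ * σ⁻¹).val
      = 1 - out (σ.val *ᵥ ej) b' (ei ᵥ* (σ⁻¹).val)
        + out ej b' ei
        - out ej (b' * (ei ⬝ᵥ (σ.val *ᵥ ej)) * b') (ei ᵥ* (σ⁻¹).val) := by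
  have hval : (tU * σ * tU⁻¹ * σ⁻¹).val
      = tU.val * (σ.val * (tU⁻¹).val * (σ⁻¹).val) := by
    rw [Units.val_mul, Units.val_mul, Units.val_mul]; noncomm_ring
  have hmid : σ.val * (tU⁻¹).val * (σ⁻¹).val
      = 1 - out (σ.val *ᵥ ej) b' (ei ᵥ* (σ⁻¹).val) := by
    rw [hti, mul_sub, mul_one, sub_mul, mul_out, out_mul]
    rw [Units.mul_inv]
  rw [hval, hmid, ht]
  have hZP : out ej b' ei * out (σ.val *ᵥ ej) b' (ei ᵥ* (σ⁻¹).val)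
      = out ej (b' * (ei ⬝ᵥ (σ.val *ᵥ ej)) * b') (ei ᵥ* (σ⁻¹).val) := out_mul_out _ _ _ _ _ _
  calc (1 + out ej b' ei) * (1 - out (σ.val *ᵥ ej) b' (ei ᵥ* (σ⁻¹).val))
      = 1 - out (σ.val *ᵥ ej) b' (ei ᵥ* (σ⁻¹).val) + out ej b' ei
        - out ej b' ei * out (σ.val *ᵥ ej) b' (ei ᵥ* (σ⁻¹).val) := by noncomm_ring
    _ = _ := by rw [hZP]

lemma gamma_inv_val (σ tU : (Mat n R)ˣ) (ej ei : Fin n → R) (b' : R)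
    (ht : tU.val = 1 + out ej b' ei) (hti : (tU⁻¹).val = 1 - out ej b' ei) :
    ((tU * σ * tU⁻¹ * σ⁻¹)⁻¹).val
      = 1 + out (σ.val *ᵥ ej) b' (ei ᵥ* (σ⁻¹).val)
        - out ej b' ei
        - out (σ.val *ᵥ ej) (b' * ((ei ᵥ* (σ⁻¹).val) ⬝ᵥ ej) * b') ei := by
  have hval : ((tU * σ * tU⁻¹ * σ⁻¹)⁻¹).val
      = σ.val * tU.val * (σ⁻¹).val * (tU⁻¹).val := by
    have : (tU * σ * tU⁻¹ * σ⁻¹)⁻¹ = σ * tU * σ⁻¹ * tU⁻¹ := by group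
    rw [this, Units.val_mul, Units.val_mul, Units.val_mul]
  have hmid : σ.val * tU.val * (σ⁻¹).val
      = 1 + out (σ.val *ᵥ ej) b' (ei ᵥ* (σ⁻¹).val) := by
    rw [ht, mul_add, mul_one, add_mul, mul_out, out_mul]
    rw [Units.mul_inv]
  rw [hval, hmid, hti]
  have hPZ : out (σ.val *ᵥ ej) b' (ei ᵥ* (σ⁻¹).val) * out ej b' ei
      = out (σ.val *ᵥ ej) (b' * ((ei ᵥ* (σ⁻¹).val) ⬝ᵥ ej) * b') ei := out_mul_out _ _ _ _ _ _
  calc (1 + out (σ.val *ᵥ ej) b' (ei ᵥ* (σ⁻¹).val)) * (1 - out ej b' ei)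
      = 1 + out (σ.val *ᵥ ej) b' (ei ᵥ* (σ⁻¹).val) - out ej b' ei
        - out (σ.val *ᵥ ej) b' (ei ᵥ* (σ⁻¹).val) * out ej b' ei := by noncomm_ring
    _ = _ := by rw [hPZ]

/-- the value of one gadget commutator. -/
lemma cval_calc (u' j' v' r' : Fin n → R) (b' sij c₀ : R) (s h : Fin n) (hsh : s ≠ h)
    (hv's : v' s = 0) (hr's : r' s = 0) (AU : (Mat n R)ˣ) (y : R)
    (hA : AU.val = 1 - out u' b' v' + out j' b' r' - out j' (b' * sij * b') v')
    (hAi : (AU⁻¹).val = 1 + out u' b' v' - out j' b' r' - out u' c₀ r')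
    (zU : (Mat n R)ˣ)
    (hz : zU.val = 1 + out (Pi.single s 1) y (Pi.single h 1))
    (hzi : (zU⁻¹).val = 1 - out (Pi.single s 1) y (Pi.single h 1)) :
    (AU⁻¹ * zU * AU * zU⁻¹).val
      = 1 + (out (Pi.single s 1) (-(y * u' h * b') - y * j' h * (b' * sij * b')) v'
          + out (Pi.single s 1) (y * j' h * b') r') := by
  set es : Fin n → R := Pi.single s 1 with hes
  set eh : Fin n → R := Pi.single h 1 with heh
  set m : Mat n R := out es y eh with hm
  have hkill : ∀ (u₁ : Fin n → R) (θ₁ : R) (w₁ : Fin n → R), w₁ s = 0 →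
      ∀ (θ₂ : R) (w₂ : Fin n → R), out u₁ θ₁ w₁ * out es θ₂ w₂ = 0 := by
    intro u₁ θ₁ w₁ hw θ₂ w₂
    rw [out_mul_out]
    have : w₁ ⬝ᵥ es = 0 := by rw [hes, dot_single_right, hw]
    rw [this, mul_zero, zero_mul, out_zero_mid]
  have hehs : eh s = 0 := by rw [heh, Pi.single_apply, if_neg hsh]
  have hAiA : (AU⁻¹).val * AU.val = 1 := by
    rw [← Units.val_mul, inv_mul_cancel, Units.val_one]
  have hAim : (AU⁻¹).val * m = m := by
    rw [hAi]
    have e1 : out u' b' v' * m = 0 := hkill _ _ _ hv's _ _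
    have e2 : out j' b' r' * m = 0 := hkill _ _ _ hr's _ _
    have e3 : out u' c₀ r' * m = 0 := hkill _ _ _ hr's _ _
    calc (1 + out u' b' v' - out j' b' r' - out u' c₀ r') * m
        = m + out u' b' v' * m - out j' b' r' * m - out u' c₀ r' * m := by noncomm_ring
      _ = m := by rw [e1, e2, e3]; simp
  have hmA : m * AU.val = m - out es (y * u' h * b') v' + out es (y * j' h * b') r'
      - out es (y * j' h * (b' * sij * b')) v' := by
    rw [hA]
    have e1 : m * out u' b' v' = out es (y * u' h * b') v' := by
      rw [hm, out_mul_out, heh, dot_single_left]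
    have e2 : m * out j' b' r' = out es (y * j' h * b') r' := by
      rw [hm, out_mul_out, heh, dot_single_left]
    have e3 : m * out j' (b' * sij * b') v' = out es (y * j' h * (b' * sij * b')) v' := by
      rw [hm, out_mul_out, heh, dot_single_left]
    calc m * (1 - out u' b' v' + out j' b' r' - out j' (b' * sij * b') v')
        = m - m * out u' b' v' + m * out j' b' r' - m * out j' (b' * sij * b') v' := by
          noncomm_ring
      _ = _ := by rw [e1, e2, e3]
  have hmAm : m * AU.val * m = 0 := by
    rw [hmA]
    have e0 : m * m = 0 := hkill _ _ _ hehs _ _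
    have e1 : out es (y * u' h * b') v' * m = 0 := hkill _ _ _ hv's _ _
    have e2 : out es (y * j' h * b') r' * m = 0 := hkill _ _ _ hr's _ _
    have e3 : out es (y * j' h * (b' * sij * b')) v' * m = 0 := hkill _ _ _ hv's _ _
    calc (m - out es (y * u' h * b') v' + out es (y * j' h * b') r'
          - out es (y * j' h * (b' * sij * b')) v') * m
        = m * m - out es (y * u' h * b') v' * m + out es (y * j' h * b') r' * m
          - out es (y * j' h * (b' * sij * b')) v' * m := by noncomm_ring
      _ = 0 := by rw [e0, e1, e2, e3]; simp
  have hfinal : (AU⁻¹ * zU * AU * zU⁻¹).val = (AU⁻¹).val * (1 + m) * AU.val * (1 - m) := by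
    rw [Units.val_mul, Units.val_mul, Units.val_mul, hz, hzi]
  rw [hfinal, conj_calc _ _ _ hAiA hAim hmAm, hmA]
  have hsplit : out es (-(y * u' h * b') - y * j' h * (b' * sij * b')) v'
      = - out es (y * u' h * b') v' - out es (y * j' h * (b' * sij * b')) v' := by
    have hx : -(y * u' h * b') - y * j' h * (b' * sij * b')
        = (-(y * u' h * b')) + (-(y * j' h * (b' * sij * b'))) := by
      rw [sub_eq_add_neg]
    rw [hx, ← out_add_mid, out_neg_mid, out_neg_mid, ← sub_eq_add_neg]
  rw [hsplit]
  abel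

end St16

namespace St16

variable {R : Type*} [Ring R] {n : ℕ}

lemma val_list_prod : ∀ (L : List (Mat n R)ˣ), (L.prod).val = (L.map Units.val).prod := by
  intro L
  induction L with
  | nil => simp
  | cons a L ih => simp [List.prod_cons, Units.val_mul, ih]

/-- Main extraction: t_{kl}(a σ_{ij} b) is a product of 8N conjugates. -/
lemma main_i {R : Type*} [Ring R] {N : ℕ}
    (heucl : ∀ v : Fin N → R, ∃ τ ∈ En N R, ∃ p : Fin N, ∑ q, v q * τ.val q p = 0)
    (σ : (Mat (N+1) R)ˣ) (i j k l : Fin (N+1)) (hij : i ≠ j) (hkl : k ≠ l) (a b : R) :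
    ∃ L : List (Mat (N+1) R)ˣ, (∀ u ∈ L, ConjFactor σ u) ∧ L.length = 8 * N ∧
      L.prod.val = trv k l (a * σ.val i j * b) := by
  classical
  set ej : Fin (N+1) → R := Pi.single j 1 with hej
  set ei : Fin (N+1) → R := Pi.single i 1 with hei
  set v : Fin (N+1) → R := ei ᵥ* (σ⁻¹).val with hv
  obtain ⟨ε, hεmem, s, p, hsi, hps, hεis, hv's0, hv'p0⟩ := reduce2 heucl v i
  obtain ⟨ξ, hξmem, η₁, η₂, hη₁, hη₂, hmv, hvm⟩ :=
    movePair_exists (R := R) (n := N+1) (Ne.symm hps) hkl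
  set es : Fin (N+1) → R := Pi.single s 1 with hes
  set ep : Fin (N+1) → R := Pi.single p 1 with hep
  set a' : R := η₁ * a with ha'
  set b' : R := b * η₂ with hb'
  set v' : Fin (N+1) → R := v ᵥ* ε.val with hv'
  have hv's : v' s = 0 := hv's0
  have hv'p : v' p = 0 := hv'p0
  set u : Fin (N+1) → R := σ.val *ᵥ ej with hu
  set u' : Fin (N+1) → R := (ε⁻¹).val *ᵥ u with hu'
  set j' : Fin (N+1) → R := (ε⁻¹).val *ᵥ ej with hj'
  set r' : Fin (N+1) → R := ei ᵥ* ε.val with hr'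
  have hr's : r' s = 0 := by rw [hr', vecMul_e]; exact hεis
  have hui : u i = σ.val i j := by rw [hu, mulVec_e]
  set tU : (Mat (N+1) R)ˣ := trvU j i (Ne.symm hij) b' with htU
  have htval : tU.val = 1 + out ej b' ei := rfl
  have htival : (tU⁻¹).val = 1 - out ej b' ei := rfl
  set ΓU : (Mat (N+1) R)ˣ := tU * σ * tU⁻¹ * σ⁻¹ with hΓU
  set AU : (Mat (N+1) R)ˣ := ε⁻¹ * ΓU * ε with hAU
  have hsij_dot : ei ⬝ᵥ (σ.val *ᵥ ej) = σ.val i j := by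
    rw [← hu, hei, dot_single_left, hui]
  have hc₀_dot : (ei ᵥ* (σ⁻¹).val) ⬝ᵥ ej = v ⬝ᵥ ej := by rw [hv]
  have hγ := gamma_val σ tU ej ei b' htval htival
  have hγi := gamma_inv_val σ tU ej ei b' htval htival
  have hAval : AU.val = 1 - out u' b' v' + out j' b' r'
      - out j' (b' * σ.val i j * b') v' := by
    have h1 : AU.val = (ε⁻¹).val * ΓU.val * ε.val := by
      rw [hAU, Units.val_mul, Units.val_mul]
    rw [h1, hΓU, hγ, hsij_dot, conj_one_addsub, conj_out, conj_out, conj_out]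
  have hAival : (AU⁻¹).val = 1 + out u' b' v' - out j' b' r'
      - out u' (b' * (v ⬝ᵥ ej) * b') r' := by
    have h0 : AU⁻¹ = ε⁻¹ * ΓU⁻¹ * ε := by rw [hAU]; group
    have h1 : (AU⁻¹).val = (ε⁻¹).val * (ΓU⁻¹).val * ε.val := by
      rw [h0, Units.val_mul, Units.val_mul]
    rw [h1, hΓU, hγi, hc₀_dot, conj_one_addsub2, conj_out, conj_out, conj_out]
  -- gadgets
  set y : Fin (N+1) → R := fun h => a' * ε.val i h with hy
  set zUf : Fin N → (Mat (N+1) R)ˣ := fun h₀ =>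
    trvU s (s.succAbove h₀) (Ne.symm (Fin.succAbove_ne s h₀)) (y (s.succAbove h₀)) with hzUf
  set cU : Fin N → (Mat (N+1) R)ˣ := fun h₀ => AU⁻¹ * zUf h₀ * AU * (zUf h₀)⁻¹ with hcU
  set c₁ : Fin N → R := fun h₀ => -(y (s.succAbove h₀) * u' (s.succAbove h₀) * b')
      - y (s.succAbove h₀) * j' (s.succAbove h₀) * (b' * σ.val i j * b') with hc₁
  set c₂ : Fin N → R := fun h₀ => y (s.succAbove h₀) * j' (s.succAbove h₀) * b' with hc₂
  set f : Fin N → Mat (N+1) R := fun h₀ => out es (c₁ h₀) v' + out es (c₂ h₀) r' with hf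
  have hcval : ∀ h₀, (cU h₀).val = 1 + f h₀ := fun h₀ =>
    cval_calc u' j' v' r' b' (σ.val i j) (b' * (v ⬝ᵥ ej) * b') s (s.succAbove h₀)
      (Ne.symm (Fin.succAbove_ne s h₀)) hv's hr's AU (y (s.succAbove h₀)) hAval hAival
      (zUf h₀) rfl rfl
  set CU : (Mat (N+1) R)ˣ := (List.ofFn cU).prod with hCU
  have hkill2 : ∀ (θ₁ : R) (w₁ : Fin (N+1) → R), w₁ s = 0 →
      ∀ (θ₂ : R) (w₂ : Fin (N+1) → R), out es θ₁ w₁ * out es θ₂ w₂ = 0 := by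
    intro θ₁ w₁ hw θ₂ w₂
    rw [out_mul_out]
    have hzz : w₁ ⬝ᵥ es = 0 := by rw [hes, dot_single_right, hw]
    rw [hzz, mul_zero, zero_mul, out_zero_mid]
  have hfmul : ∀ α β, f α * f β = 0 := by
    intro α β
    rw [hf]
    show (out es (c₁ α) v' + out es (c₂ α) r') * (out es (c₁ β) v' + out es (c₂ β) r') = 0
    rw [add_mul, mul_add, mul_add, hkill2 _ _ hv's, hkill2 _ _ hv's,
      hkill2 _ _ hr's, hkill2 _ _ hr's]
    simp
  have hCval0 : CU.val = 1 + (out es (∑ h₀, c₁ h₀) v' + out es (∑ h₀, c₂ h₀) r') := by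
    rw [hCU, val_list_prod, List.map_ofFn]
    have h1 : (Units.val ∘ cU) = fun h₀ => 1 + f h₀ := funext fun h₀ => hcval h₀
    rw [h1, prodOneAdd f hfmul, hf]
    rw [Finset.sum_add_distrib, sum_out, sum_out]
  -- the sums
  have hsum_aux : ∀ (g : Fin (N+1) → R),
      (∑ h₀ : Fin N, ε.val i (s.succAbove h₀) * g (s.succAbove h₀))
      = (∑ h : Fin (N+1), ε.val i h * g h) - ε.val i s * g s := by
    intro g
    have h1 := Fin.sum_univ_succAbove (fun h => ε.val i h * g h) s
    rw [h1]; abel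
  have hYsum : ∀ (g : Fin (N+1) → R),
      (∑ h₀ : Fin N, y (s.succAbove h₀) * g (s.succAbove h₀))
      = a' * ((∑ h : Fin (N+1), ε.val i h * g h) - ε.val i s * g s) := by
    intro g
    have h1 : ∀ h, y h * g h = a' * (ε.val i h * g h) := by
      intro h; rw [hy]; rw [mul_assoc]
    calc (∑ h₀ : Fin N, y (s.succAbove h₀) * g (s.succAbove h₀))
        = ∑ h₀ : Fin N, a' * (ε.val i (s.succAbove h₀) * g (s.succAbove h₀)) := by
          refine Finset.sum_congr rfl fun h₀ _ => h1 _
      _ = a' * ∑ h₀ : Fin N, (ε.val i (s.succAbove h₀) * g (s.succAbove h₀)) :=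
          (Finset.mul_sum _ _ _).symm
      _ = _ := by rw [hsum_aux g]
  have hsum_u' : (∑ h : Fin (N+1), ε.val i h * u' h) = σ.val i j := by
    have h1 : (∑ h : Fin (N+1), ε.val i h * u' h) = (ε.val *ᵥ u') i := rfl
    rw [h1, hu', Matrix.mulVec_mulVec, Units.mul_inv, Matrix.one_mulVec, hui]
  have hsum_j' : (∑ h : Fin (N+1), ε.val i h * j' h) = 0 := by
    have h1 : (∑ h : Fin (N+1), ε.val i h * j' h) = (ε.val *ᵥ j') i := rfl
    rw [h1, hj', Matrix.mulVec_mulVec, Units.mul_inv, Matrix.one_mulVec, hej,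
      Pi.single_apply, if_neg hij]
  have hYu' : (∑ h₀ : Fin N, y (s.succAbove h₀) * u' (s.succAbove h₀)) = a' * σ.val i j := by
    rw [hYsum u', hsum_u', hεis, zero_mul, sub_zero]
  have hYj' : (∑ h₀ : Fin N, y (s.succAbove h₀) * j' (s.succAbove h₀)) = 0 := by
    rw [hYsum j', hsum_j', hεis, zero_mul, sub_zero, mul_zero]
  have hsc₁ : (∑ h₀, c₁ h₀) = -(a' * σ.val i j * b') := by
    rw [hc₁]
    show (∑ h₀ : Fin N, (-(y (s.succAbove h₀) * u' (s.succAbove h₀) * b')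
        - y (s.succAbove h₀) * j' (s.succAbove h₀) * (b' * σ.val i j * b'))) = _
    rw [Finset.sum_sub_distrib, Finset.sum_neg_distrib]
    have e1 : (∑ h₀ : Fin N, y (s.succAbove h₀) * u' (s.succAbove h₀) * b')
        = (∑ h₀ : Fin N, y (s.succAbove h₀) * u' (s.succAbove h₀)) * b' :=
      (Finset.sum_mul _ _ _).symm
    have e2 : (∑ h₀ : Fin N, y (s.succAbove h₀) * j' (s.succAbove h₀) * (b' * σ.val i j * b'))
        = (∑ h₀ : Fin N, y (s.succAbove h₀) * j' (s.succAbove h₀)) * (b' * σ.val i j * b') :=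
      (Finset.sum_mul _ _ _).symm
    rw [e1, e2, hYu', hYj', zero_mul, sub_zero]
  have hsc₂ : (∑ h₀, c₂ h₀) = 0 := by
    rw [hc₂]
    show (∑ h₀ : Fin N, y (s.succAbove h₀) * j' (s.succAbove h₀) * b') = 0
    have e2 : (∑ h₀ : Fin N, y (s.succAbove h₀) * j' (s.succAbove h₀) * b')
        = (∑ h₀ : Fin N, y (s.succAbove h₀) * j' (s.succAbove h₀)) * b' :=
      (Finset.sum_mul _ _ _).symm
    rw [e2, hYj', zero_mul]
  set Mt : Mat (N+1) R := out es (-(a' * σ.val i j * b')) v' with hMt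
  have hCval : CU.val = 1 + Mt := by
    rw [hCval0, hsc₁, hsc₂, out_zero_mid, add_zero, hMt]
  have hM2 : Mt * Mt = 0 := hkill2 _ _ hv's _ _
  have hCinv : (CU⁻¹).val = 1 - Mt := inv_val_of_sq CU Mt hCval hM2
  -- final commutator
  set w₀ : Fin (N+1) → R := (ε⁻¹).val *ᵥ (σ.val *ᵥ ei) with hw₀
  set u₀ : Fin (N+1) → R := w₀ - Pi.single p (w₀ p) with hu₀
  have hu₀p : u₀ p = 0 := by rw [hu₀]; simp
  have hdotp : ep ⬝ᵥ u₀ = 0 := by rw [hep, dot_single_left, hu₀p]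
  set n₀ : Mat (N+1) R := out u₀ 1 ep with hn₀
  have hn₀sq : n₀ * n₀ = 0 := out_sq_zero _ _ _ hdotp
  set e₀U : (Mat (N+1) R)ˣ := oneAddUnit n₀ hn₀sq with he₀U
  have he₀mem : e₀U ∈ En (N+1) R := by
    refine colU_mem' p u₀ hu₀p e₀U ?_
    rw [he₀U, oneAddUnit_val, hn₀, hep]
  have hv'u₀ : v' ⬝ᵥ u₀ = 1 := by
    rw [hu₀, dotProduct_sub]
    have h2 : v' ⬝ᵥ Pi.single p (w₀ p) = 0 := by
      have : v' ⬝ᵥ Pi.single p (w₀ p) = v' p * w₀ p := by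
        simp [dotProduct, Pi.single_apply]
      rw [this, hv'p, zero_mul]
    have h1 : v' ⬝ᵥ w₀ = 1 := by
      rw [hw₀, hv', ← Matrix.dotProduct_mulVec, Matrix.mulVec_mulVec, Units.mul_inv,
        Matrix.one_mulVec, Matrix.dotProduct_mulVec, hv, Matrix.vecMul_vecMul,
        Units.inv_mul, Matrix.vecMul_one, hei]
      simp [dotProduct, Pi.single_apply]
    rw [h1, h2, sub_zero]
  have hn₀M : n₀ * Mt = 0 := by
    rw [hn₀, hMt, out_mul_out]
    have hzz : ep ⬝ᵥ es = 0 := by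
      rw [hep, hes, dot_single_left, Pi.single_apply, if_neg hps]
    rw [hzz, mul_zero, zero_mul, out_zero_mid]
  have hMn₀ : Mt * n₀ = out es (-(a' * σ.val i j * b')) ep := by
    rw [hMt, hn₀, out_mul_out, hv'u₀, mul_one, mul_one]
  set dU : (Mat (N+1) R)ˣ := CU⁻¹ * e₀U * CU * e₀U⁻¹ with hdU
  have hdval : dU.val = 1 + out es (a' * σ.val i j * b') ep := by
    have h1 : dU.val = (CU⁻¹).val * e₀U.val * CU.val * (e₀U⁻¹).val := by
      rw [hdU, Units.val_mul, Units.val_mul, Units.val_mul]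
    have h2 : e₀U.val = 1 + n₀ := rfl
    have h3 : (e₀U⁻¹).val = 1 - n₀ := rfl
    rw [h1, hCinv, hCval, h2, h3, comm_collapse Mt n₀ hM2 hn₀sq hn₀M, hMn₀,
      out_neg_mid, sub_neg_eq_add]
  -- conjugate factor lists
  set g₁ : (Mat (N+1) R)ˣ := ε⁻¹ * σ * ε with hg₁
  set g₂ : (Mat (N+1) R)ˣ := (tU⁻¹ * ε)⁻¹ * σ⁻¹ * (tU⁻¹ * ε) with hg₂
  set g₃ : Fin N → (Mat (N+1) R)ˣ := fun h₀ =>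
    (tU⁻¹ * ε * (zUf h₀)⁻¹)⁻¹ * σ * (tU⁻¹ * ε * (zUf h₀)⁻¹) with hg₃
  set g₄ : Fin N → (Mat (N+1) R)ˣ := fun h₀ =>
    (ε * (zUf h₀)⁻¹)⁻¹ * σ⁻¹ * (ε * (zUf h₀)⁻¹) with hg₄
  set Lc : Fin N → List (Mat (N+1) R)ˣ := fun h₀ => [g₁, g₂, g₃ h₀, g₄ h₀] with hLc
  have hLcprod : ∀ h₀, (Lc h₀).prod = cU h₀ := by
    intro h₀
    show (g₁ * (g₂ * (g₃ h₀ * (g₄ h₀ * 1)))) = cU h₀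
    rw [hg₁, hg₂, hg₃, hg₄, hcU, hAU, hΓU]
    group
  have hLcmem : ∀ h₀, ∀ gg ∈ Lc h₀, ConjFactor σ gg := by
    intro h₀ gg hgg
    have htUmem : tU ∈ En (N+1) R := by rw [htU]; exact trvU_mem _ _ _ _
    have hzmem : zUf h₀ ∈ En (N+1) R := by
      show trvU _ _ _ _ ∈ En (N+1) R
      exact trvU_mem _ _ _ _
    simp only [hLc, List.mem_cons, List.not_mem_nil, or_false] at hgg
    rcases hgg with rfl | rfl | rfl | rfl
    · exact ⟨ε, hεmem, Or.inl hg₁⟩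
    · exact ⟨tU⁻¹ * ε, mul_mem (inv_mem htUmem) hεmem, Or.inr hg₂⟩
    · exact ⟨tU⁻¹ * ε * (zUf h₀)⁻¹,
        mul_mem (mul_mem (inv_mem htUmem) hεmem) (inv_mem hzmem), Or.inl (by rw [hg₃])⟩
    · exact ⟨ε * (zUf h₀)⁻¹, mul_mem hεmem (inv_mem hzmem), Or.inr (by rw [hg₄])⟩
  set LC : List (Mat (N+1) R)ˣ := (List.ofFn Lc).flatten with hLC
  have hLCprod : LC.prod = CU := by
    rw [hLC, List.prod_flatten, List.map_ofFn]
    have h1 : (List.prod ∘ Lc) = cU := funext fun h₀ => hLcprod h₀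
    rw [h1, hCU]
  have hLClen : LC.length = 4 * N := by
    rw [hLC, List.length_flatten, List.map_ofFn]
    have h1 : (List.length ∘ Lc) = fun _ => 4 := funext fun h₀ => by simp [hLc]
    rw [h1, List.sum_ofFn]
    simp [Finset.sum_const, Finset.card_univ, Nat.mul_comm]
  have hLCmem : ∀ gg ∈ LC, ConjFactor σ gg := by
    intro gg hgg
    rw [hLC] at hgg
    obtain ⟨l, hl, hgl⟩ := List.mem_flatten.1 hgg
    obtain ⟨h₀, hh₀⟩ := List.mem_ofFn.1 hl
    exact hLcmem h₀ gg (hh₀ ▸ hgl)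
  set Li : List (Mat (N+1) R)ˣ := (LC.map fun uu => uu⁻¹).reverse with hLi
  have hLiprod : Li.prod = CU⁻¹ := by rw [hLi, prod_inv_rev, hLCprod]
  have hLilen : Li.length = 4 * N := by
    rw [hLi, List.length_reverse, List.length_map, hLClen]
  have hLimem : ∀ gg ∈ Li, ConjFactor σ gg := by
    intro gg hgg
    rw [hLi, List.mem_reverse, List.mem_map] at hgg
    obtain ⟨uu, huu, rfl⟩ := hgg
    exact (hLCmem uu huu).inv
  set Lj : List (Mat (N+1) R)ˣ := LC.map (fun uu => (e₀U⁻¹)⁻¹ * uu * e₀U⁻¹) with hLj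
  have hLjprod : Lj.prod = e₀U * CU * e₀U⁻¹ := by
    rw [hLj, prod_map_conj, hLCprod, inv_inv]
  have hLjlen : Lj.length = 4 * N := by rw [hLj, List.length_map, hLClen]
  have hLjmem : ∀ gg ∈ Lj, ConjFactor σ gg := by
    intro gg hgg
    rw [hLj, List.mem_map] at hgg
    obtain ⟨uu, huu, rfl⟩ := hgg
    exact (hLCmem uu huu).conj _ (inv_mem he₀mem)
  set Ld : List (Mat (N+1) R)ˣ := Li ++ Lj with hLd
  have hLdprod : Ld.prod = dU := by
    rw [hLd, List.prod_append, hLiprod, hLjprod, hdU]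
    group
  set Lfin : List (Mat (N+1) R)ˣ := Ld.map (fun uu => ξ⁻¹ * uu * ξ) with hLfin
  have hLfinmem : ∀ gg ∈ Lfin, ConjFactor σ gg := by
    intro gg hgg
    rw [hLfin, List.mem_map] at hgg
    obtain ⟨uu, huu, rfl⟩ := hgg
    rw [hLd, List.mem_append] at huu
    rcases huu with h | h
    · exact (hLimem uu h).conj ξ hξmem
    · exact (hLjmem uu h).conj ξ hξmem
  have hLfinlen : Lfin.length = 8 * N := by
    rw [hLfin, List.length_map, hLd, List.length_append, hLilen, hLjlen]
    omega
  have hLfinprod : Lfin.prod.val = trv k l (a * σ.val i j * b) := by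
    rw [hLfin, prod_map_conj, hLdprod]
    rw [Units.val_mul, Units.val_mul, hdval]
    have hexp : (ξ⁻¹).val * (1 + out es (a' * σ.val i j * b') ep) * ξ.val
        = (ξ⁻¹).val * ξ.val + (ξ⁻¹).val * out es (a' * σ.val i j * b') ep * ξ.val := by
      noncomm_ring
    have hinvmul : (ξ⁻¹).val * ξ.val = 1 := by
      rw [← Units.val_mul, inv_mul_cancel, Units.val_one]
    rw [hexp, hinvmul, conj_out, hes, hep, hmv, hvm, out_single_smul_left, out_smul_right]
    have hval : η₁ * (a' * σ.val i j * b') * η₂ = a * σ.val i j * b := by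
      rw [ha', hb']
      rcases hη₁ with rfl | rfl <;> rcases hη₂ with rfl | rfl <;> noncomm_ring
    rw [hval, ← trv_eq]
  exact ⟨Lfin, hLfinmem, hLfinlen, hLfinprod⟩

end St16

namespace St16

variable {R : Type*} [Ring R] {n : ℕ}

lemma isProdConj_of_list (σ : (Mat n R)ˣ) (m : ℕ) (A : Mat n R)
    (L : List (Mat n R)ˣ) (hmem : ∀ u ∈ L, ConjFactor σ u) (hlen : L.length = m)
    (hprod : L.prod.val = A) : IsProdConj m σ A := by
  subst hlen
  refine ⟨fun q => L.get q, fun q => hmem _ (List.get_mem L q), ?_⟩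
  rw [List.ofFn_get]
  exact hprod

lemma conj_entry (σ : (Mat n R)ˣ) (i j : Fin n) (hij : i ≠ j) (c : R) :
    ((trvU j i (Ne.symm hij) (-c))⁻¹ * σ * trvU j i (Ne.symm hij) (-c)).val j i
      = σ.val j i + c * σ.val i i - σ.val j j * c - c * σ.val i j * c := by
  have h0 : ((trvU j i (Ne.symm hij) (-c))⁻¹).val = trv j i c := by
    rw [trvU_inv_val, neg_neg]
  rw [Units.val_mul, Units.val_mul, h0, trvU_val, trv_eq, trv_eq]
  set ej : Fin n → R := Pi.single j 1 with hej
  set ei : Fin n → R := Pi.single i 1 with hei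
  have e1 : (1 + out ej c ei) * σ.val = σ.val + out ej c (ei ᵥ* σ.val) := by
    rw [add_mul, one_mul, out_mul]
  have e2 : (σ.val + out ej c (ei ᵥ* σ.val)) * (1 + out ej (-c) ei)
      = σ.val + out ej c (ei ᵥ* σ.val) + out (σ.val *ᵥ ej) (-c) ei
        + out ej (c * ((ei ᵥ* σ.val) ⬝ᵥ ej) * (-c)) ei := by
    rw [mul_add, mul_one, add_mul, mul_out, out_mul_out]
    abel
  rw [e1, e2]
  have d1 : (ei ᵥ* σ.val) ⬝ᵥ ej = σ.val i j := by
    rw [hej, dot_single_right, vecMul_e]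
  rw [d1]
  have d2 : (ei ᵥ* σ.val) i = σ.val i i := by rw [vecMul_e]
  have d3 : (σ.val *ᵥ ej) j = σ.val j j := by rw [mulVec_e]
  simp only [Matrix.add_apply, out_apply, d2, d3, hej, hei, Pi.single_apply,
    if_pos rfl, if_neg hij, if_neg (Ne.symm hij)]
  noncomm_ring
  simp

end St16

open St16 in
theorem stmt16 {R : Type*} [Ring R] [Nontrivial R] {n : ℕ} (hn : 3 ≤ n)
    (heucl : ∀ v : Fin (n - 1) → R, ∃ τ ∈ En (n - 1) R, ∃ p : Fin (n - 1),
      ∑ q, v q * τ.val q p = 0)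
    (σ : (Mat n R)ˣ) (i j : Fin n) (hij : i ≠ j) (k l : Fin n) (hkl : k ≠ l) (a b c : R) :
    IsProdConj (8 * (n - 1)) σ (trv k l (a * σ.val i j * b)) ∧
    IsProdConj (24 * (n - 1)) σ
      (trv k l (a * (c * σ.val i i - σ.val j j * c) * b)) := by
  obtain ⟨N, rfl⟩ : ∃ N, n = N + 1 := ⟨n - 1, by omega⟩
  constructor
  · obtain ⟨L, hmem, hlen, hprod⟩ := main_i heucl σ i j k l hij hkl a b
    exact isProdConj_of_list σ (8 * (N + 1 - 1)) _ L hmem hlen hprod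
  · set ζ : (Mat (N+1) R)ˣ := trvU j i (Ne.symm hij) (-c) with hζ
    have hζmem : ζ ∈ En (N+1) R := by rw [hζ]; exact trvU_mem _ _ _ _
    set σ' : (Mat (N+1) R)ˣ := ζ⁻¹ * σ * ζ with hσ'
    have hentry : σ'.val j i
        = σ.val j i + c * σ.val i i - σ.val j j * c - c * σ.val i j * c :=
      conj_entry σ i j hij c
    obtain ⟨L₁, hmem₁, hlen₁, hprod₁⟩ := main_i heucl σ' j i k l (Ne.symm hij) hkl a b
    obtain ⟨L₂, hmem₂, hlen₂, hprod₂⟩ := main_i heucl σ j i k l (Ne.symm hij) hkl (-a) b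
    obtain ⟨L₃, hmem₃, hlen₃, hprod₃⟩ := main_i heucl σ i j k l hij hkl (a * c) (c * b)
    refine isProdConj_of_list σ (24 * (N + 1 - 1)) _ (L₁ ++ L₂ ++ L₃) ?_ ?_ ?_
    · intro u hu
      rw [List.mem_append, List.mem_append] at hu
      rcases hu with (h | h) | h
      · exact (hmem₁ u h).of_conj ζ hζmem hσ'
      · exact hmem₂ u h
      · exact hmem₃ u h
    · rw [List.length_append, List.length_append, hlen₁, hlen₂, hlen₃]
      omega
    · rw [List.prod_append, List.prod_append, Units.val_mul, Units.val_mul,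
        hprod₁, hprod₂, hprod₃, trv_mul_trv k l hkl, trv_mul_trv k l hkl, hentry]
      congr 1
      noncomm_ring
end
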